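/- arXiv:2107.14260 — 4 statements merged into one kernel-verified Lean document; each statement's English description precedes it below -/
import Mathlib

section
/- Let S be a continuous finitely generated free semigroup action on a compact metric space X with topological entropy h_top(X, S) > 0. If K ⊆ X is a closed subset with h_top(K, S) > 0, then K contains an entropy point of S, i.e. a point x such that every closed neighborhood N of x satisfies h_top(N, S) > 0. -/
open Set Filter Topology

noncomputable section

variable {X Y : Type*} [MetricSpace X] [MetricSpace Y]

/-- The Bowen/dynamical metric along a word, given as the list of maps to be applied
(in order of application). -/
def dynDist : List (X → X) → X → X → ℝ
  | [], x, y => dist x y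
  | f :: w, x, y => max (dist x y) (dynDist w (f x) (f y))

/-- A set `E` is `(w, ε)`-separated if distinct points of `E` are at `dynDist w`-distance `> ε`. -/
def IsDynSeparated (w : List (X → X)) (ε : ℝ) (E : Set X) : Prop :=
  E.Pairwise fun x y => ε < dynDist w x y

/-- A set `F` is `(w, ε)`-spanning for `K` if every point of `K` is at
`dynDist w`-distance `< ε` of a point of `F`. -/
def IsDynSpanning (w : List (X → X)) (ε : ℝ) (K F : Set X) : Prop :=
  ∀ x ∈ K, ∃ y ∈ F, dynDist w x y < ε

/-- `s(K, w, ε)`: maximal cardinality of a `(w, ε)`-separated subset of `K`. -/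
def sepCard (K : Set X) (w : List (X → X)) (ε : ℝ) : ℕ :=
  sSup {n | ∃ E : Finset X, ↑E ⊆ K ∧ IsDynSeparated w ε (↑E : Set X) ∧ E.card = n}

/-- `b(K, w, ε)`: minimal cardinality of a `(w, ε)`-spanning subset of `K`. -/
def spanCard (K : Set X) (w : List (X → X)) (ε : ℝ) : ℕ :=
  sInf {n | ∃ F : Finset X, ↑F ⊆ K ∧ IsDynSpanning w ε K (↑F : Set X) ∧ F.card = n}

variable {p : ℕ}

/-- `S_n(K, 𝕊, ε)`: averaged count of maximal separated sets over all words of length `n`. -/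
def SepSum (g : Fin p → X → X) (K : Set X) (n : ℕ) (ε : ℝ) : ℝ :=
  (1 / (p : ℝ) ^ n) * ∑ u : Fin n → Fin p, (sepCard K ((List.ofFn u).map g) ε : ℝ)

/-- Averaged count of minimal spanning sets over all words of length `n`. -/
def SpanSum (g : Fin p → X → X) (K : Set X) (n : ℕ) (ε : ℝ) : ℝ :=
  (1 / (p : ℝ) ^ n) * ∑ u : Fin n → Fin p, (spanCard K ((List.ofFn u).map g) ε : ℝ)

/-- `S_d(K, 𝕊, ε)`: exponential growth rate of `SepSum`. -/
def SepRate (g : Fin p → X → X) (K : Set X) (ε : ℝ) : EReal :=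
  Filter.limsup (fun n : ℕ => ((Real.log (SepSum g K n ε) / n : ℝ) : EReal)) Filter.atTop

/-- `B_d(K, 𝕊, ε)`: exponential growth rate of `SpanSum`. -/
def SpanRate (g : Fin p → X → X) (K : Set X) (ε : ℝ) : EReal :=
  Filter.limsup (fun n : ℕ => ((Real.log (SpanSum g K n ε) / n : ℝ) : EReal)) Filter.atTop

/-- Bufetov topological entropy `h_top(K, 𝕊)` of the free semigroup action generated by `g`
restricted to `K`: the limit (= supremum, by monotonicity) of `SepRate` as `ε → 0⁺`. -/
def semigroupEntropy (g : Fin p → X → X) (K : Set X) : EReal :=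
  ⨆ ε : {ε : ℝ // 0 < ε}, SepRate g K (ε : ℝ)

/-- `x` is an entropy point: every closed neighbourhood has positive entropy. -/
def IsEntropyPoint (g : Fin p → X → X) (x : X) : Prop :=
  ∀ K : Set X, K ∈ nhds x → IsClosed K → 0 < semigroupEntropy g K

/-- `x` is a full entropy point: every closed neighbourhood carries full entropy. -/
def IsFullEntropyPoint (g : Fin p → X → X) (x : X) : Prop :=
  ∀ K : Set X, K ∈ nhds x → IsClosed K → semigroupEntropy g K = semigroupEntropy g Set.univ

/-- Bowen entropy growth rate of a single map `F` on `C` at scale `ε`. -/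
def mapSepRate (F : Y → Y) (C : Set Y) (ε : ℝ) : EReal :=
  Filter.limsup
    (fun n : ℕ => ((Real.log (sepCard C (List.replicate n F) ε) / n : ℝ) : EReal)) Filter.atTop

/-- Classical Bowen topological entropy of a single map `F` on a subset `C`. -/
def mapEntropy (F : Y → Y) (C : Set Y) : EReal :=
  ⨆ ε : {ε : ℝ // 0 < ε}, mapSepRate F C (ε : ℝ)

/-- Spanning growth rate of a single map. -/
def mapSpanRate (F : Y → Y) (C : Set Y) (ε : ℝ) : EReal :=
  Filter.limsup
    (fun n : ℕ => ((Real.log (spanCard C (List.replicate n F) ε) / n : ℝ) : EReal)) Filter.atTop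

/-- `h_d(x, ε)` for the semigroup action: infimum of `SpanRate` over compact neighbourhoods. -/
def hdEps (g : Fin p → X → X) (x : X) (ε : ℝ) : EReal :=
  ⨅ K : {K : Set X // K ∈ nhds x ∧ IsCompact K}, SpanRate g (K : Set X) ε

/-- The entropy function `h_top(x)` of the semigroup action. -/
def entropyFn (g : Fin p → X → X) (x : X) : EReal :=
  ⨆ ε : {ε : ℝ // 0 < ε}, hdEps g x (ε : ℝ)

/-- `h_{D}(y, ε)` for a single map. -/
def mapHdEps (F : Y → Y) (y : Y) (ε : ℝ) : EReal :=
  ⨅ C : {C : Set Y // C ∈ nhds y ∧ IsCompact C}, mapSpanRate F (C : Set Y) ε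

/-- The entropy function of a single map. -/
def mapEntropyFn (F : Y → Y) (y : Y) : EReal :=
  ⨆ ε : {ε : ℝ // 0 < ε}, mapHdEps F y (ε : ℝ)

/-- The step skew-product `F_G(ω, x) = (σω, g_{ω₀}(x))` on `(ℕ → Fin p) × X`. -/
def skewProduct (g : Fin p → X → X) : ((ℕ → Fin p) × X) → ((ℕ → Fin p) × X) :=
  fun q => (fun n => q.1 (n + 1), g (q.1 0) q.2)

/-- The cylinder `[w₁ … w_ℓ]` in `Σ_p⁺ = ℕ → Fin p`. -/
def cylinder {ℓ : ℕ} (w : Fin ℓ → Fin p) : Set (ℕ → Fin p) :=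
  {ω | ∀ i : Fin ℓ, ω (i : ℕ) = w i}

attribute [local instance] PiNat.metricSpace

section Aux

variable {X : Type*} [MetricSpace X]

lemma dynDist_self (w : List (X → X)) (x : X) : dynDist w x x = 0 := by
  induction w generalizing x with
  | nil => simp [dynDist]
  | cons f w ih => simp [dynDist, ih]

lemma dynDist_comm (w : List (X → X)) (x y : X) : dynDist w x y = dynDist w y x := by
  induction w generalizing x y with
  | nil => simp [dynDist, dist_comm]
  | cons f w ih => simp [dynDist, dist_comm, ih]

lemma dynDist_triangle (w : List (X → X)) (x y z : X) :
    dynDist w x z ≤ dynDist w x y + dynDist w y z := by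
  induction w generalizing x y z with
  | nil => exact dist_triangle x y z
  | cons f w ih =>
      simp only [dynDist, max_le_iff]
      constructor
      · exact le_trans (dist_triangle x y z)
          (add_le_add (le_max_left _ _) (le_max_left _ _))
      · exact le_trans (ih (f x) (f y) (f z))
          (add_le_add (le_max_right _ _) (le_max_right _ _))

lemma continuous_dynDist {w : List (X → X)} (hw : ∀ f ∈ w, Continuous f) (x : X) :
    Continuous (fun y => dynDist w x y) := by
  induction w generalizing x with
  | nil => exact (continuous_const.dist continuous_id)
  | cons f w ih =>
      have hf : Continuous f := hw f (by simp)
      have hw' : ∀ f ∈ w, Continuous f := fun f hf => hw f (by simp [hf])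
      exact (continuous_const.dist continuous_id).max ((ih hw' (f x)).comp hf)

/-- Uniform bound on cardinalities of separated sets, for a fixed word. -/
lemma sep_card_bound [CompactSpace X] {w : List (X → X)} (hw : ∀ f ∈ w, Continuous f)
    {ε : ℝ} (hε : 0 < ε) :
    ∃ m : ℕ, ∀ E : Finset X, IsDynSeparated w ε (↑E : Set X) → E.card ≤ m := by
  classical
  have hcov : (Set.univ : Set X) ⊆ ⋃ x : X, {y | dynDist w x y < ε / 2} := by
    intro y _
    exact Set.mem_iUnion.2 ⟨y, by simp [dynDist_self, half_pos hε]⟩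
  obtain ⟨t, ht⟩ := isCompact_univ.elim_finite_subcover
    (fun x : X => {y | dynDist w x y < ε / 2})
    (fun x => isOpen_lt (continuous_dynDist hw x) continuous_const) hcov
  refine ⟨t.card, fun E hE => ?_⟩
  have hchoice : ∀ e : X, ∃ c ∈ t, dynDist w c e < ε / 2 := by
    intro e
    have := ht (Set.mem_univ e)
    simp only [Set.mem_iUnion, Set.mem_setOf_eq] at this
    obtain ⟨c, hc, h⟩ := this
    exact ⟨c, hc, h⟩
  choose c hc hcd using hchoice
  refine Finset.card_le_card_of_injOn c (fun e he => hc e) ?_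
  intro e he e' he' hee
  by_contra hne
  have hsep := hE (by exact he) (by exact he') hne
  have : dynDist w e e' < ε := by
    calc dynDist w e e' ≤ dynDist w e (c e) + dynDist w (c e) e' := dynDist_triangle _ _ _ _
    _ < ε / 2 + ε / 2 := by
        refine add_lt_add ?_ ?_
        · rw [dynDist_comm]; exact hcd e
        · rw [hee]; exact hcd e'
    _ = ε := add_halves ε
  exact absurd hsep (not_lt.2 this.le)

lemma zero_mem_sepSet (K : Set X) (w : List (X → X)) (ε : ℝ) :
    0 ∈ {n | ∃ E : Finset X, ↑E ⊆ K ∧ IsDynSeparated w ε (↑E : Set X) ∧ E.card = n} :=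
  ⟨∅, by simp, by simp [IsDynSeparated], rfl⟩

lemma sepSet_bddAbove [CompactSpace X] {w : List (X → X)} (hw : ∀ f ∈ w, Continuous f)
    {ε : ℝ} (hε : 0 < ε) (K : Set X) :
    BddAbove {n | ∃ E : Finset X, ↑E ⊆ K ∧ IsDynSeparated w ε (↑E : Set X) ∧ E.card = n} := by
  obtain ⟨m, hm⟩ := sep_card_bound hw hε
  exact ⟨m, fun n ⟨E, _, hsep, hcard⟩ => hcard ▸ hm E hsep⟩

lemma le_sepCard [CompactSpace X] {w : List (X → X)} (hw : ∀ f ∈ w, Continuous f)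
    {ε : ℝ} (hε : 0 < ε) {K : Set X} {E : Finset X} (hEK : ↑E ⊆ K)
    (hsep : IsDynSeparated w ε (↑E : Set X)) : E.card ≤ sepCard K w ε :=
  le_csSup (sepSet_bddAbove hw hε K) ⟨E, hEK, hsep, rfl⟩

lemma one_le_sepCard [CompactSpace X] {w : List (X → X)} (hw : ∀ f ∈ w, Continuous f)
    {ε : ℝ} (hε : 0 < ε) {K : Set X} (hK : K.Nonempty) : 1 ≤ sepCard K w ε := by
  obtain ⟨x, hx⟩ := hK
  have := le_sepCard (E := {x}) hw hε (by simpa using hx) (by simp [IsDynSeparated])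
  simpa using this

lemma sepCard_le_sum_of_cover [CompactSpace X] {w : List (X → X)}
    (hw : ∀ f ∈ w, Continuous f) {ε : ℝ} (hε : 0 < ε) {K : Set X}
    {ι : Type*} {t : Finset ι} {N : ι → Set X} (hcov : K ⊆ ⋃ i ∈ t, N i) :
    sepCard K w ε ≤ ∑ i ∈ t, sepCard (N i) w ε := by
  classical
  have hmem := Nat.sSup_mem ⟨0, zero_mem_sepSet K w ε⟩ (sepSet_bddAbove hw hε K)
  obtain ⟨E, hEK, hsep, hcard⟩ := hmem
  rw [sepCard, ← hcard]
  have hsub : E ⊆ t.biUnion (fun i => E.filter (fun e => e ∈ N i)) := by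
    intro e he
    have := hcov (hEK he)
    simp only [Set.mem_iUnion] at this
    obtain ⟨i, hi, hei⟩ := this
    exact Finset.mem_biUnion.2 ⟨i, hi, Finset.mem_filter.2 ⟨he, hei⟩⟩
  calc E.card ≤ (t.biUnion (fun i => E.filter (fun e => e ∈ N i))).card :=
        Finset.card_le_card hsub
  _ ≤ ∑ i ∈ t, (E.filter (fun e => e ∈ N i)).card := Finset.card_biUnion_le
  _ ≤ ∑ i ∈ t, sepCard (N i) w ε := by
      refine Finset.sum_le_sum fun i _ => ?_
      refine le_sepCard hw hε ?_ ?_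
      · intro e he
        simp only [Finset.coe_filter, Set.mem_setOf_eq] at he
        exact he.2
      · exact hsep.mono (by intro e he; simp only [Finset.coe_filter, Set.mem_setOf_eq] at he; exact he.1)

end Aux
section Aux2

variable {X : Type*} [MetricSpace X] {p : ℕ}

lemma word_continuous {g : Fin p → X → X} (hg : ∀ i, Continuous (g i)) {n : ℕ}
    (u : Fin n → Fin p) : ∀ f ∈ (List.ofFn u).map g, Continuous f := by
  intro f hf
  simp only [List.mem_map, List.mem_ofFn] at hf
  obtain ⟨i, ⟨j, rfl⟩, rfl⟩ := hf
  exact hg _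

lemma SepSum_le_sum_of_cover [CompactSpace X] [NeZero p] {g : Fin p → X → X}
    (hg : ∀ i, Continuous (g i)) {ε : ℝ} (hε : 0 < ε) {K : Set X}
    {ι : Type*} {t : Finset ι} {N : ι → Set X} (hcov : K ⊆ ⋃ i ∈ t, N i) (n : ℕ) :
    SepSum g K n ε ≤ ∑ i ∈ t, SepSum g (N i) n ε := by
  unfold SepSum
  rw [← Finset.mul_sum]
  refine mul_le_mul_of_nonneg_left ?_ (by positivity)
  rw [Finset.sum_comm]
  refine Finset.sum_le_sum fun u _ => ?_
  have := sepCard_le_sum_of_cover (word_continuous hg u) hε hcov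
  exact_mod_cast this

lemma one_le_SepSum [CompactSpace X] [NeZero p] {g : Fin p → X → X}
    (hg : ∀ i, Continuous (g i)) {ε : ℝ} (hε : 0 < ε) {K : Set X} (hK : K.Nonempty)
    (n : ℕ) : 1 ≤ SepSum g K n ε := by
  unfold SepSum
  have hp : (0:ℝ) < (p:ℝ) ^ n := by
    have := Nat.pos_of_ne_zero (NeZero.ne p)
    positivity
  rw [div_mul_eq_mul_div, one_mul, le_div_iff₀ hp, one_mul]
  calc ((p:ℝ)^n) = ∑ _u : Fin n → Fin p, (1:ℝ) := by
        simp [Finset.card_univ, Fintype.card_fun]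
  _ ≤ ∑ u : Fin n → Fin p, (sepCard K ((List.ofFn u).map g) ε : ℝ) := by
        refine Finset.sum_le_sum fun u _ => ?_
        exact_mod_cast one_le_sepCard (word_continuous hg u) hε hK

lemma semigroupEntropy_empty (g : Fin p → X → X) :
    semigroupEntropy g (∅ : Set X) = 0 := by
  have hsc : ∀ w (ε : ℝ), sepCard (∅ : Set X) w ε = 0 := by
    intro w ε
    unfold sepCard
    refine (congrArg sSup (?_ : _ = ({0} : Set ℕ))).trans (csSup_singleton 0)
    ext n
    simp only [Set.mem_setOf_eq, Set.mem_singleton_iff]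
    constructor
    · rintro ⟨E, hE, -, rfl⟩
      simpa using Finset.card_eq_zero.2 (by simpa [Finset.subset_empty] using
        (by exact_mod_cast hE : (E : Set X) ⊆ ∅))
    · rintro rfl
      exact ⟨∅, by simp, by simp [IsDynSeparated], rfl⟩
  have hss : ∀ n ε, SepSum g (∅ : Set X) n ε = 0 := by
    intro n ε; unfold SepSum; simp [hsc]
  unfold semigroupEntropy SepRate
  have : ∀ ε : {ε : ℝ // 0 < ε},
      Filter.limsup (fun n : ℕ =>
        ((Real.log (SepSum g (∅:Set X) n (ε:ℝ)) / n : ℝ) : EReal)) Filter.atTop = 0 := by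
    intro ε
    simp [hss, Filter.limsup_const]
  simp only [this, iSup_const]

end Aux2
section Aux3

variable {X : Type*} [MetricSpace X] {p : ℕ}

lemma SepRate_le_zero_of_cover [CompactSpace X] [NeZero p] {g : Fin p → X → X}
    (hg : ∀ i, Continuous (g i)) {ε : ℝ} (hε : 0 < ε) {K : Set X} (hKne : K.Nonempty)
    {ι : Type*} {t : Finset ι} (htne : t.Nonempty) {N : ι → Set X}
    (hNne : ∀ i ∈ t, (N i).Nonempty) (hcov : K ⊆ ⋃ i ∈ t, N i)
    (hrate : ∀ i ∈ t, SepRate g (N i) ε ≤ 0) :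
    SepRate g K ε ≤ 0 := by
  classical
  set m : ℕ := t.card with hm
  have hm0 : 0 < m := Finset.card_pos.2 htne
  have key : ∀ c : ℝ, 0 < c → SepRate g K ε ≤ (c : EReal) := by
    intro c hc
    have hcm : (0:ℝ) < c / (2 * m) := by positivity
    have h1 : ∀ i ∈ t, ∀ᶠ n : ℕ in Filter.atTop,
        Real.log (SepSum g (N i) n ε) / n < c / (2 * m) := by
      intro i hi
      have hlt : SepRate g (N i) ε < ((c / (2 * m) : ℝ) : EReal) :=
        lt_of_le_of_lt (hrate i hi) (by exact_mod_cast hcm)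
      have := Filter.eventually_lt_of_limsup_lt hlt
      filter_upwards [this] with n hn
      exact_mod_cast hn
    have h2 : ∀ᶠ n : ℕ in Filter.atTop, Real.log m / n < c / 2 := by
      have := tendsto_const_div_atTop_nhds_zero_nat (Real.log m)
      exact this.eventually_lt_const (by positivity)
    have h1' : ∀ᶠ n : ℕ in Filter.atTop, ∀ i ∈ t,
        Real.log (SepSum g (N i) n ε) / n < c / (2 * m) :=
      (Filter.eventually_all_finset t).2 h1
    have hev : ∀ᶠ n : ℕ in Filter.atTop,
        ((Real.log (SepSum g K n ε) / n : ℝ) : EReal) ≤ (c : EReal) := by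
      filter_upwards [h1', h2, Filter.eventually_ge_atTop 1] with n hn1 hn2 hn3
      have hnpos : (0:ℝ) < n := by exact_mod_cast hn3
      have hb1 : ∀ i ∈ t, (1:ℝ) ≤ SepSum g (N i) n ε := fun i hi =>
        one_le_SepSum hg hε (hNne i hi) n
      have hKpos : (0:ℝ) < SepSum g K n ε := lt_of_lt_of_le one_pos (one_le_SepSum hg hε hKne n)
      have hsum : SepSum g K n ε ≤ (m:ℝ) * ∏ i ∈ t, SepSum g (N i) n ε := by
        calc SepSum g K n ε ≤ ∑ i ∈ t, SepSum g (N i) n ε :=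
              SepSum_le_sum_of_cover hg hε hcov n
        _ ≤ ∑ _i ∈ t, ∏ j ∈ t, SepSum g (N j) n ε := by
              refine Finset.sum_le_sum fun i hi => ?_
              rw [← Finset.mul_prod_erase t _ hi]
              nth_rewrite 1 [← mul_one (SepSum g (N i) n ε)]
              refine mul_le_mul_of_nonneg_left ?_ (le_trans zero_le_one (hb1 i hi))
              calc (1:ℝ) = ∏ _j ∈ t.erase i, (1:ℝ) := by simp
              _ ≤ ∏ j ∈ t.erase i, SepSum g (N j) n ε :=
                  Finset.prod_le_prod (fun j _ => zero_le_one)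
                    (fun j hj => hb1 j (Finset.mem_of_mem_erase hj))
        _ = (m:ℝ) * ∏ j ∈ t, SepSum g (N j) n ε := by
              rw [Finset.sum_const, nsmul_eq_mul]
      have hlog : Real.log (SepSum g K n ε) ≤
          Real.log m + ∑ i ∈ t, Real.log (SepSum g (N i) n ε) := by
        calc Real.log (SepSum g K n ε)
            ≤ Real.log ((m:ℝ) * ∏ i ∈ t, SepSum g (N i) n ε) :=
              Real.log_le_log hKpos hsum
        _ = Real.log m + Real.log (∏ i ∈ t, SepSum g (N i) n ε) := by
              rw [Real.log_mul (by exact_mod_cast hm0.ne') ?_]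
              refine ne_of_gt (Finset.prod_pos fun i hi => lt_of_lt_of_le one_pos (hb1 i hi))
        _ = Real.log m + ∑ i ∈ t, Real.log (SepSum g (N i) n ε) := by
              rw [Real.log_prod]
              intro i hi
              exact ne_of_gt (lt_of_lt_of_le one_pos (hb1 i hi))
      have hfinal : Real.log (SepSum g K n ε) / n ≤ c := by
        calc Real.log (SepSum g K n ε) / n
            ≤ (Real.log m + ∑ i ∈ t, Real.log (SepSum g (N i) n ε)) / n :=
              div_le_div_of_nonneg_right hlog hnpos.le |>.trans_eq rfl
        _ = Real.log m / n + ∑ i ∈ t, Real.log (SepSum g (N i) n ε) / n := by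
              rw [add_div, Finset.sum_div]
        _ ≤ c / 2 + ∑ i ∈ t, (c / (2 * m)) := by
              refine add_le_add hn2.le (Finset.sum_le_sum fun i hi => (hn1 i hi).le)
        _ = c / 2 + (m:ℝ) * (c / (2 * m)) := by rw [Finset.sum_const, nsmul_eq_mul]
        _ = c := by
              field_simp
              ring
      exact_mod_cast hfinal
    exact Filter.limsup_le_of_le (by isBoundedDefault) hev
  by_contra h
  push_neg at h
  obtain ⟨c, hc1, hc2⟩ := EReal.lt_iff_exists_real_btwn.1 h
  have h0c : (0:ℝ) < c := by exact_mod_cast hc1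
  exact absurd (key c h0c) (not_le.2 hc2)

end Aux3
/-- a closed set of positive entropy contains an entropy point. -/
theorem exists_entropyPoint_of_pos [CompactSpace X] {p : ℕ} [NeZero p]
    (g : Fin p → X → X) (hg : ∀ i, Continuous (g i))
    (hpos : 0 < semigroupEntropy g Set.univ)
    (K : Set X) (hK : IsClosed K) (hKpos : 0 < semigroupEntropy g K) :
    ∃ x ∈ K, IsEntropyPoint g x := by
  classical
  by_contra hcon
  push_neg at hcon
  have hKne : K.Nonempty := by
    rcases Set.eq_empty_or_nonempty K with rfl | h
    · rw [semigroupEntropy_empty] at hKpos; exact absurd hKpos (lt_irrefl 0)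
    · exact h
  have hch : ∀ x : K, ∃ N : Set X, N ∈ nhds (x:X) ∧ IsClosed N ∧ semigroupEntropy g N ≤ 0 := by
    intro x
    have h := hcon x x.2
    unfold IsEntropyPoint at h
    push_neg at h
    obtain ⟨N, hN1, hN2, hN3⟩ := h
    exact ⟨N, hN1, hN2, hN3⟩
  choose N hN1 hN2 hN3 using hch
  have hKc : IsCompact K := hK.isCompact
  have hcov : K ⊆ ⋃ x : K, interior (N x) := fun y hy =>
    Set.mem_iUnion.2 ⟨⟨y, hy⟩, mem_interior_iff_mem_nhds.2 (hN1 ⟨y, hy⟩)⟩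
  obtain ⟨t, ht⟩ := hKc.elim_finite_subcover (fun x : K => interior (N x))
    (fun x => isOpen_interior) hcov
  have hcov' : K ⊆ ⋃ i ∈ t, N i := ht.trans (Set.iUnion₂_mono fun i _ => interior_subset)
  have htne : t.Nonempty := by
    rcases hKne with ⟨x, hx⟩
    have hx' := hcov' hx
    simp only [Set.mem_iUnion] at hx'
    obtain ⟨i, hi, -⟩ := hx'
    exact ⟨i, hi⟩
  have hNne : ∀ i ∈ t, (N i).Nonempty := fun i _ => ⟨i, mem_of_mem_nhds (hN1 i)⟩
  have hfin : semigroupEntropy g K ≤ 0 := by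
    unfold semigroupEntropy
    refine iSup_le fun ε => ?_
    refine SepRate_le_zero_of_cover hg ε.2 hKne htne hNne hcov' fun i hi => ?_
    calc SepRate g (N i) (ε:ℝ)
        ≤ semigroupEntropy g (N i) :=
          le_iSup (fun ε' : {ε : ℝ // 0 < ε} => SepRate g (N i) (ε':ℝ)) ε
    _ ≤ 0 := hN3 i
  exact absurd hKpos (not_lt.2 hfin)
end
end

section
/- Let F_G be the step skew-product on Σ_p⁺ × X induced by continuous maps g₁,...,g_p on a compact metric space X. Then every point of Σ_p⁺ × X is an entropy point of F_G; in fact every closed neighborhood of any point has topological entropy at least log p. -/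
open Set Filter Topology

noncomputable section

variable {X Y : Type*} [MetricSpace X] [MetricSpace Y]

variable {p : ℕ}

attribute [local instance] PiNat.metricSpace

/-! ### Auxiliary lemmas -/

/-- Apply the maps of a word in order. -/
def iterL : List (X → X) → X → X
  | [], x => x
  | f :: w, x => iterL w (f x)

lemma dist_le_dynDist (w : List (X → X)) (x y : X) : dist x y ≤ dynDist w x y := by
  cases w with
  | nil => exact le_rfl
  | cons f w => exact le_max_left _ _

lemma dist_iterL_le_dynDist (w : List (X → X)) : ∀ u, u <+: w → ∀ x y : X,
    dist (iterL u x) (iterL u y) ≤ dynDist w x y := by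
  induction w with
  | nil =>
    intro u hu x y
    rw [List.prefix_nil.mp hu]
    exact le_rfl
  | cons f w ih =>
    intro u hu x y
    cases u with
    | nil => exact dist_le_dynDist _ x y
    | cons f' u =>
      obtain ⟨he, hu'⟩ := List.cons_prefix_cons.mp hu
      subst he
      exact le_trans (ih u hu' _ _) (le_max_right _ _)

lemma dynDist_lt_of_forall (w : List (X → X)) : ∀ (x y : X) {ε : ℝ},
    (∀ u, u <+: w → dist (iterL u x) (iterL u y) < ε) → dynDist w x y < ε := by
  induction w with
  | nil =>
    intro x y ε h
    exact h [] List.nil_prefix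
  | cons f w ih =>
    intro x y ε h
    rw [show dynDist (f :: w) x y = max (dist x y) (dynDist w (f x) (f y)) from rfl, max_lt_iff]
    refine ⟨h [] List.nil_prefix, ?_⟩
    exact ih (f x) (f y) fun u hu => h (f :: u) (List.cons_prefix_cons.mpr ⟨rfl, hu⟩)

lemma sepCardSet_bddAbove {Y : Type*} [MetricSpace Y] [CompactSpace Y]
    (C : Set Y) (w : List (Y → Y)) {ε : ℝ} (hε : 0 < ε) :
    BddAbove {n | ∃ E : Finset Y, ↑E ⊆ C ∧ IsDynSeparated w ε (↑E : Set Y) ∧ E.card = n} := by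
  have htb : TotallyBounded (Set.univ : Set Y) := isCompact_univ.totallyBounded
  obtain ⟨t, htf, htc⟩ := Metric.totallyBounded_iff.mp htb (ε / 2) (by positivity)
  have hcov : ∀ z : Y, ∃ y ∈ t, dist z y < ε / 2 := by
    intro z
    have := htc (Set.mem_univ z)
    simpa [Metric.mem_ball] using this
  choose c hct hcd using hcov
  refine ⟨htf.toFinset.card ^ (w.length + 1), ?_⟩
  rintro n ⟨E, hEC, hEs, rfl⟩
  have hcard : E.card ≤ (Fintype.piFinset fun _ : Fin (w.length + 1) => htf.toFinset).card := by
    refine Finset.card_le_card_of_injOn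
      (fun x (j : Fin (w.length + 1)) => c (iterL (w.take (j : ℕ)) x)) ?_ ?_
    · intro x _
      rw [Finset.mem_coe, Fintype.mem_piFinset]
      intro j
      exact htf.mem_toFinset.mpr (hct _)
    · intro x hx y hy hxy
      by_contra hne
      have hsep : ε < dynDist w x y := hEs (by simpa using hx) (by simpa using hy) hne
      have hlt : dynDist w x y < ε := by
        apply dynDist_lt_of_forall
        intro u hu
        have hul : u.length ≤ w.length := hu.length_le
        have hut : u = w.take u.length := List.prefix_iff_eq_take.mp hu
        have hj : (⟨u.length, Nat.lt_succ_of_le hul⟩ : Fin (w.length + 1)) =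
            (⟨u.length, Nat.lt_succ_of_le hul⟩ : Fin (w.length + 1)) := rfl
        have hcc := congrFun hxy (⟨u.length, Nat.lt_succ_of_le hul⟩ : Fin (w.length + 1))
        simp only at hcc
        calc dist (iterL u x) (iterL u y)
            ≤ dist (iterL u x) (c (iterL u x)) + dist (c (iterL u x)) (iterL u y) :=
              dist_triangle _ _ _
          _ < ε / 2 + ε / 2 := by
              apply add_lt_add (hcd _)
              rw [dist_comm]
              have : c (iterL u x) = c (iterL u y) := by
                rw [hut]
                exact hcc
              rw [this]
              exact hcd _
          _ = ε := by ring
      linarith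
  calc E.card ≤ (Fintype.piFinset fun _ : Fin (w.length + 1) => htf.toFinset).card := hcard
    _ = htf.toFinset.card ^ (w.length + 1) := by
        rw [Fintype.card_piFinset]
        simp

lemma iterL_replicate {Y : Type*} (F : Y → Y) : ∀ (m : ℕ) (x : Y),
    iterL (List.replicate m F) x = F^[m] x
  | 0, x => rfl
  | m + 1, x => by
      rw [List.replicate_succ]
      show iterL (List.replicate m F) (F x) = F^[m + 1] x
      rw [iterL_replicate F m (F x), Function.iterate_succ_apply]

lemma skewProduct_iterate_fst {p : ℕ} (g : Fin p → X → X) :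
    ∀ (m : ℕ) (z : (ℕ → Fin p) × X), ((skewProduct g)^[m] z).1 = fun i => z.1 (i + m)
  | 0, z => rfl
  | m + 1, z => by
      rw [Function.iterate_succ_apply, skewProduct_iterate_fst g m (skewProduct g z)]
      rfl

/-- every point of `Σ_p⁺ × X` is an entropy point of the step skew-product;
indeed every closed neighbourhood has Bowen entropy at least `log p`. -/
theorem skewProduct_entropyPoints [CompactSpace X] {p : ℕ} [NeZero p]
    (g : Fin p → X → X) (hg : ∀ i, Continuous (g i))
    (q : (ℕ → Fin p) × X) (N : Set ((ℕ → Fin p) × X)) (hN : N ∈ nhds q) (hNc : IsClosed N) :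
    (Real.log p : EReal) ≤ mapEntropy (skewProduct g) N := by
  classical
  set F := skewProduct g with hF
  have hp1 : 1 ≤ p := Nat.one_le_iff_ne_zero.mpr (NeZero.ne p)
  haveI : CompactSpace (ℕ → Fin p) := Pi.compactSpace
  obtain ⟨r, hr, hball⟩ := Metric.mem_nhds_iff.mp hN
  obtain ⟨ℓ, hℓ⟩ : ∃ ℓ : ℕ, ((1 : ℝ) / 2) ^ ℓ < r := exists_pow_lt_of_lt_one hr (by norm_num)
  -- Step 1: many separated points
  have key : ∀ n : ℕ, ℓ ≤ n →
      (p : ℝ) ^ (n - ℓ) ≤ (sepCard N (List.replicate n F) (1 / 2) : ℝ) := by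
    intro n hn
    set k := n - ℓ with hk
    set ω : (Fin k → Fin p) → ℕ → Fin p := fun u i =>
      if h : ℓ ≤ i ∧ i - ℓ < k then u ⟨i - ℓ, h.2⟩ else q.1 i with hω
    set z : (Fin k → Fin p) → (ℕ → Fin p) × X := fun u => (ω u, q.2) with hz
    have hωval : ∀ u (j : Fin k), ω u (ℓ + (j : ℕ)) = u j := by
      intro u j
      have hcond : ℓ ≤ ℓ + (j : ℕ) ∧ ℓ + (j : ℕ) - ℓ < k :=
        ⟨Nat.le_add_right _ _, by have := j.2; omega⟩
      simp only [hω]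
      rw [dif_pos hcond]
      congr 1
      exact Fin.ext (by simp)
    have hmem : ∀ u, z u ∈ N := by
      intro u
      apply hball
      have h1 : dist (ω u) q.1 ≤ (1 / 2 : ℝ) ^ ℓ := by
        apply PiNat.mem_cylinder_iff_dist_le.mp
        intro i hi
        simp only [hω]
        rw [dif_neg]
        intro h
        omega
      have h2 : dist (z u) q ≤ (1 / 2 : ℝ) ^ ℓ := by
        rw [Prod.dist_eq]
        refine max_le h1 ?_
        simp only [hz, dist_self]
        positivity
      exact Metric.mem_ball.mpr (lt_of_le_of_lt h2 hℓ)
    have hinj : Function.Injective z := by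
      intro u v h
      funext j
      have h1 : ω u = ω v := congrArg Prod.fst h
      have h2 := congrFun h1 (ℓ + (j : ℕ))
      rwa [hωval, hωval] at h2
    have hsep : ∀ u v, u ≠ v →
        (1 : ℝ) / 2 < dynDist (List.replicate n F) (z u) (z v) := by
      intro u v huv
      obtain ⟨j, hj⟩ := Function.ne_iff.mp huv
      set m := ℓ + (j : ℕ) with hm
      have hmn : m ≤ n := by have := j.2; omega
      have hfst : ((F^[m] (z u)).1) 0 ≠ ((F^[m] (z v)).1) 0 := by
        rw [skewProduct_iterate_fst, skewProduct_iterate_fst]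
        show (z u).1 (0 + m) ≠ (z v).1 (0 + m)
        simp only [hz, zero_add, hm]
        rw [hωval, hωval]
        exact hj
      have h1 : (1 : ℝ) ≤ dist ((F^[m] (z u)).1) ((F^[m] (z v)).1) := by
        by_contra h
        push_neg at h
        exact hfst (PiNat.apply_eq_of_dist_lt (by simpa using h) (le_refl 0))
      have h2 : (1 : ℝ) ≤ dist (F^[m] (z u)) (F^[m] (z v)) :=
        h1.trans (by rw [Prod.dist_eq]; exact le_max_left _ _)
      have hpre : List.replicate m F <+: List.replicate n F :=
        ⟨List.replicate (n - m) F, by rw [← List.replicate_add]; congr 1; omega⟩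
      have h3 := dist_iterL_le_dynDist (List.replicate n F) _ hpre (z u) (z v)
      rw [iterL_replicate, iterL_replicate] at h3
      linarith
    have hmemset : p ^ k ∈ {m | ∃ E : Finset ((ℕ → Fin p) × X), ↑E ⊆ N ∧
        IsDynSeparated (List.replicate n F) (1 / 2) (↑E : Set ((ℕ → Fin p) × X)) ∧
        E.card = m} := by
      refine ⟨Finset.image z Finset.univ, ?_, ?_, ?_⟩
      · intro a ha
        simp only [Finset.coe_image, Set.mem_image] at ha
        obtain ⟨u, -, rfl⟩ := ha
        exact hmem u
      · intro a ha b hb hab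
        simp only [Finset.coe_image, Set.mem_image, Finset.mem_coe] at ha hb
        obtain ⟨u, -, rfl⟩ := ha
        obtain ⟨v, -, rfl⟩ := hb
        exact hsep u v fun h => hab (by rw [h])
      · rw [Finset.card_image_of_injective _ hinj, Finset.card_univ]
        simp
    have hle : p ^ k ≤ sepCard N (List.replicate n F) (1 / 2) :=
      le_csSup (sepCardSet_bddAbove N _ (by norm_num)) hmemset
    exact_mod_cast hle
  -- Step 2: the growth rate is at least `log p`
  have hlogp : (0 : ℝ) ≤ Real.log p := Real.log_nonneg (by exact_mod_cast hp1)
  have hrate : (Real.log p : EReal) ≤ mapSepRate F N (1 / 2) := by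
    set a : ℕ → ℝ := fun n =>
      Real.log (sepCard N (List.replicate n F) (1 / 2)) / n with ha
    set b : ℕ → ℝ := fun n => (1 - (ℓ : ℝ) / n) * Real.log p with hb
    have hbt : Tendsto b atTop (nhds (Real.log p)) := by
      have h0 : Tendsto (fun n : ℕ => (ℓ : ℝ) / n) atTop (nhds 0) :=
        tendsto_const_nhds.div_atTop tendsto_natCast_atTop_atTop
      have h1 : Tendsto (fun n : ℕ => (1 : ℝ) - (ℓ : ℝ) / n) atTop (nhds (1 - 0)) :=
        tendsto_const_nhds.sub h0
      have h2 := h1.mul_const (Real.log p)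
      simpa using h2
    have hab : ∀ᶠ n in atTop, ((b n : ℝ) : EReal) ≤ ((a n : ℝ) : EReal) := by
      filter_upwards [eventually_ge_atTop (ℓ + 1)] with n hn
      rw [EReal.coe_le_coe_iff]
      have hn0 : (0 : ℝ) < n := by
        have : 0 < n := by omega
        exact_mod_cast this
      have h1 : (p : ℝ) ^ (n - ℓ) ≤ (sepCard N (List.replicate n F) (1 / 2) : ℝ) :=
        key n (by omega)
      have h2 : ((n - ℓ : ℕ) : ℝ) * Real.log p ≤
          Real.log (sepCard N (List.replicate n F) (1 / 2)) := by
        calc ((n - ℓ : ℕ) : ℝ) * Real.log p = Real.log ((p : ℝ) ^ (n - ℓ)) :=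
              (Real.log_pow _ _).symm
          _ ≤ _ := Real.log_le_log (by positivity) h1
      have hcast : ((n - ℓ : ℕ) : ℝ) = (n : ℝ) - ℓ := by
        rw [Nat.cast_sub (by omega)]
      have h3 : b n = (((n : ℝ) - ℓ) * Real.log p) / n := by
        simp only [hb]
        field_simp
      rw [h3]
      show _ ≤ Real.log (sepCard N (List.replicate n F) (1 / 2)) / (n : ℝ)
      gcongr
      rw [← hcast]
      exact h2
    calc (Real.log p : EReal)
        = Filter.limsup (fun n : ℕ => ((b n : ℝ) : EReal)) atTop :=
          ((EReal.tendsto_coe.mpr hbt).limsup_eq).symm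
      _ ≤ Filter.limsup (fun n : ℕ => ((a n : ℝ) : EReal)) atTop :=
          Filter.limsup_le_limsup hab
      _ = mapSepRate F N (1 / 2) := rfl
  exact hrate.trans
    (le_iSup (fun ε : {ε : ℝ // 0 < ε} => mapSepRate F N (ε : ℝ)) ⟨1 / 2, by norm_num⟩)
end
end

section
/- Let F_G be the step skew-product induced by a free semigroup action S on a compact metric space X. If (ω, x) is a full entropy point of F_G (every closed neighborhood of (ω,x) has entropy equal to h_top(Σ_p⁺ × X, F_G)), then x is a full entropy point of S (every closed neighborhood K of x in X satisfies h_top(K, S) = h_top(X, S)). -/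
open Set Filter Topology

noncomputable section

variable {X Y : Type*} [MetricSpace X] [MetricSpace Y]

variable {p : ℕ}

attribute [local instance] PiNat.metricSpace


section Aux

namespace EntropyAux

open Classical in
lemma dynDist_nonneg {Z : Type*} [MetricSpace Z] :
    ∀ (w : List (Z → Z)) (x y : Z), 0 ≤ dynDist w x y
  | [], _, _ => dist_nonneg
  | _ :: _, _, _ => le_trans dist_nonneg (le_max_left _ _)

lemma dynDist_self {Z : Type*} [MetricSpace Z] :
    ∀ (w : List (Z → Z)) (x : Z), dynDist w x x = 0
  | [], x => dist_self x
  | f :: w, x => by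
      show max (dist x x) (dynDist w (f x) (f x)) = 0
      simp [dynDist_self w (f x)]

lemma dist_le_dynDist {Z : Type*} [MetricSpace Z] :
    ∀ (w : List (Z → Z)) (x y : Z), dist x y ≤ dynDist w x y
  | [], _, _ => le_rfl
  | _ :: _, _, _ => le_max_left _ _

lemma exists_sepBound {Z : Type*} [MetricSpace Z] (htb : TotallyBounded (Set.univ : Set Z))
    {ε : ℝ} (hε : 0 < ε) (w : List (Z → Z)) :
    ∃ N : ℕ, ∀ E : Finset Z, IsDynSeparated w ε (↑E : Set Z) → E.card ≤ N := by
  classical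
  obtain ⟨t, htf, htcov⟩ := Metric.totallyBounded_iff.1 htb (ε / 2) (by linarith)
  have hc : ∀ z : Z, ∃ c ∈ t, z ∈ Metric.ball c (ε / 2) := by
    intro z
    simpa using htcov (Set.mem_univ z)
  choose c hct hcb using hc
  have hclose : ∀ z z' : Z, c z = c z' → dist z z' < ε := by
    intro z z' h
    have h1 := Metric.mem_ball.1 (hcb z)
    have h2 := Metric.mem_ball.1 (hcb z')
    rw [h] at h1
    calc dist z z' ≤ dist z (c z') + dist (c z') z' := dist_triangle _ _ _
      _ < ε / 2 + ε / 2 := add_lt_add h1 (by rwa [dist_comm] at h2)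
      _ = ε := by ring
  induction w with
  | nil =>
    refine ⟨htf.toFinset.card, fun E hE => ?_⟩
    apply Finset.card_le_card_of_injOn c (fun z _ => htf.mem_toFinset.2 (hct z))
    intro a ha b hb hab
    by_contra hne
    have h := hE (by simpa using ha) (by simpa using hb) hne
    exact absurd (hclose a b hab) (not_lt.2 h.le)
  | cons f w ih =>
    obtain ⟨N, hN⟩ := ih
    refine ⟨N * htf.toFinset.card, fun E hE => ?_⟩
    refine Finset.card_le_mul_card_image_of_maps_to (f := c) (t := htf.toFinset)
      (fun a _ => htf.mem_toFinset.2 (hct a)) N ?_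
    intro b _
    set s := {a ∈ E | c a = b} with hs
    have hsub : s ⊆ E := Finset.filter_subset _ _
    have hss : ∀ u ∈ s, ∀ v ∈ s, u ≠ v → ε < dynDist w (f u) (f v) := by
      intro u hu v hv huv
      have hdist : dist u v < ε := hclose u v (by
        rw [(Finset.mem_filter.1 hu).2, (Finset.mem_filter.1 hv).2])
      have h2 : ε < max (dist u v) (dynDist w (f u) (f v)) :=
        hE (Finset.mem_coe.2 (hsub hu)) (Finset.mem_coe.2 (hsub hv)) huv
      rcases lt_max_iff.1 h2 with h | h
      · exact absurd hdist (not_lt.2 h.le)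
      · exact h
    have hinj : Set.InjOn f ↑s := by
      intro u hu v hv huv
      by_contra hne
      have h := hss u (Finset.mem_coe.1 hu) v (Finset.mem_coe.1 hv) hne
      rw [huv] at h
      exact absurd (dynDist_self w (f v)) (by intro h0; rw [h0] at h; linarith)
    rw [← Finset.card_image_of_injOn hinj]
    apply hN
    intro a ha b' hb' hab
    obtain ⟨u, hu, rfl⟩ := Finset.mem_image.1 (Finset.mem_coe.1 ha)
    obtain ⟨v, hv, rfl⟩ := Finset.mem_image.1 (Finset.mem_coe.1 hb')
    exact hss u hu v hv (fun h => hab (by rw [h]))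

lemma zero_mem_sepSet {Z : Type*} [MetricSpace Z] (K : Set Z) (w : List (Z → Z)) (ε : ℝ) :
    0 ∈ {n | ∃ E : Finset Z, ↑E ⊆ K ∧ IsDynSeparated w ε (↑E : Set Z) ∧ E.card = n} :=
  ⟨∅, by simp, by simp [IsDynSeparated], rfl⟩

lemma bddAbove_sepSet {Z : Type*} [MetricSpace Z] (htb : TotallyBounded (Set.univ : Set Z))
    {ε : ℝ} (hε : 0 < ε) (K : Set Z) (w : List (Z → Z)) :
    BddAbove {n | ∃ E : Finset Z, ↑E ⊆ K ∧ IsDynSeparated w ε (↑E : Set Z) ∧ E.card = n} := by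
  obtain ⟨N, hN⟩ := exists_sepBound htb hε w
  exact ⟨N, fun n ⟨E, _, hsep, hcard⟩ => hcard ▸ hN E hsep⟩

lemma le_sepCard {Z : Type*} [MetricSpace Z] (htb : TotallyBounded (Set.univ : Set Z))
    {ε : ℝ} (hε : 0 < ε) {K : Set Z} {w : List (Z → Z)} {n : ℕ}
    (h : ∃ E : Finset Z, ↑E ⊆ K ∧ IsDynSeparated w ε (↑E : Set Z) ∧ E.card = n) :
    n ≤ sepCard K w ε :=
  le_csSup (bddAbove_sepSet htb hε K w) h

lemma sepCard_le {Z : Type*} [MetricSpace Z] {K : Set Z} {w : List (Z → Z)} {ε : ℝ} {N : ℕ}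
    (h : ∀ E : Finset Z, ↑E ⊆ K → IsDynSeparated w ε (↑E : Set Z) → E.card ≤ N) :
    sepCard K w ε ≤ N :=
  csSup_le ⟨0, zero_mem_sepSet K w ε⟩ (fun _ ⟨E, h1, h2, h3⟩ => h3 ▸ h E h1 h2)

lemma one_le_sepCard {Z : Type*} [MetricSpace Z] (htb : TotallyBounded (Set.univ : Set Z))
    {ε : ℝ} (hε : 0 < ε) {K : Set Z} (hK : K.Nonempty) (w : List (Z → Z)) :
    1 ≤ sepCard K w ε := by
  obtain ⟨z, hz⟩ := hK
  exact le_sepCard htb hε ⟨{z}, by simpa using hz, by simp [IsDynSeparated], Finset.card_singleton z⟩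

lemma exists_maximal_sep {Z : Type*} [MetricSpace Z] (htb : TotallyBounded (Set.univ : Set Z))
    {ε : ℝ} (hε : 0 < ε) (K : Set Z) (w : List (Z → Z)) :
    ∃ E : Finset Z, ↑E ⊆ K ∧ IsDynSeparated w ε (↑E : Set Z) ∧ E.card = sepCard K w ε :=
  Nat.sSup_mem ⟨0, zero_mem_sepSet K w ε⟩ (bddAbove_sepSet htb hε K w)

lemma sepCard_mono {Z : Type*} [MetricSpace Z] (htb : TotallyBounded (Set.univ : Set Z))
    {ε : ℝ} (hε : 0 < ε) {K K' : Set Z} (hKK' : K ⊆ K') (w : List (Z → Z)) :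
    sepCard K w ε ≤ sepCard K' w ε :=
  sepCard_le (fun E h1 h2 => le_sepCard htb hε ⟨E, h1.trans hKK', h2, rfl⟩)

lemma sepCard_anti {Z : Type*} [MetricSpace Z] (htb : TotallyBounded (Set.univ : Set Z))
    {ε ε' : ℝ} (hε' : 0 < ε') (h : ε' ≤ ε) (K : Set Z) (w : List (Z → Z)) :
    sepCard K w ε ≤ sepCard K w ε' :=
  sepCard_le (fun E h1 h2 =>
    le_sepCard htb hε' ⟨E, h1, fun a ha b hb hab => h.trans_lt (h2 ha hb hab), rfl⟩)

section Skew

variable [NeZero p]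

lemma piNat_dist_le {m : ℕ} {ω ω' : ℕ → Fin p} (h : ∀ i < m, ω i = ω' i) :
    dist ω ω' ≤ (1 / 2 : ℝ) ^ m :=
  PiNat.mem_cylinder_iff_dist_le.1 (fun i hi => h i hi)

lemma one_le_piNat_dist {ω ω' : ℕ → Fin p} (h : ω 0 ≠ ω' 0) : 1 ≤ dist ω ω' := by
  by_contra hlt
  push_neg at hlt
  have h0 : dist ω ω' < (1 / 2 : ℝ) ^ 0 := by simpa using hlt
  exact h (PiNat.apply_eq_of_dist_lt h0 le_rfl)

lemma tb_sigma : TotallyBounded (Set.univ : Set (ℕ → Fin p)) := by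
  rw [Metric.totallyBounded_iff]
  intro δ hδ
  obtain ⟨n, hn⟩ := exists_pow_lt_of_lt_one hδ (by norm_num : (1 / 2 : ℝ) < 1)
  have hp : 0 < p := Nat.pos_of_ne_zero (NeZero.ne p)
  refine ⟨Set.range (fun (v : Fin n → Fin p) (k : ℕ) =>
    if h : k < n then v ⟨k, h⟩ else ⟨0, hp⟩), Set.finite_range _, ?_⟩
  intro ω _
  refine Set.mem_iUnion₂.2 ⟨_, ⟨(fun i : Fin n => ω i), rfl⟩, ?_⟩
  rw [Metric.mem_ball]
  refine lt_of_le_of_lt (piNat_dist_le ?_) hn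
  intro i hi
  simp [hi]

lemma tb_Y [CompactSpace X] : TotallyBounded (Set.univ : Set ((ℕ → Fin p) × X)) := by
  rw [Metric.totallyBounded_iff]
  intro δ hδ
  obtain ⟨t1, h1f, h1⟩ := Metric.totallyBounded_iff.1 (tb_sigma (p := p)) δ hδ
  obtain ⟨t2, h2f, h2⟩ :=
    Metric.totallyBounded_iff.1 (isCompact_univ.totallyBounded (s := (Set.univ : Set X))) δ hδ
  refine ⟨t1 ×ˢ t2, h1f.prod h2f, ?_⟩
  rintro ⟨ω, z⟩ -
  obtain ⟨c1, hc1, hb1⟩ := Set.mem_iUnion₂.1 (h1 (Set.mem_univ ω))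
  obtain ⟨c2, hc2, hb2⟩ := Set.mem_iUnion₂.1 (h2 (Set.mem_univ z))
  refine Set.mem_iUnion₂.2 ⟨(c1, c2), Set.mk_mem_prod hc1 hc2, ?_⟩
  rw [Metric.mem_ball, Prod.dist_eq]
  exact max_lt (Metric.mem_ball.1 hb1) (Metric.mem_ball.1 hb2)

variable (g : Fin p → X → X)

lemma dynDist_word_le_skew : ∀ (n : ℕ) (ω : ℕ → Fin p) (x y : X),
    dynDist (List.ofFn (fun i : Fin n => g (ω i))) x y
      ≤ dynDist (List.replicate n (skewProduct g)) (ω, x) (ω, y)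
  | 0, ω, x, y => by
      show dist x y ≤ dist (ω, x) (ω, y)
      rw [Prod.dist_eq]
      exact le_max_right _ _
  | (n + 1), ω, x, y => by
      rw [List.replicate_succ]
      simp only [List.ofFn_succ, Fin.val_succ, Fin.val_zero]
      show max (dist x y)
          (dynDist (List.ofFn fun i : Fin n => g (ω (i.val + 1))) (g (ω 0) x) (g (ω 0) y))
        ≤ max (dist (ω, x) (ω, y))
            (dynDist (List.replicate n (skewProduct g)) (skewProduct g (ω, x))
              (skewProduct g (ω, y)))
      apply max_le
      · exact le_trans (by rw [Prod.dist_eq]; exact le_max_right _ _) (le_max_left _ _)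
      · exact le_trans (dynDist_word_le_skew n (fun k => ω (k + 1)) (g (ω 0) x) (g (ω 0) y))
          (le_max_right _ _)

lemma one_le_skewDyn : ∀ (n : ℕ) (ω ω' : ℕ → Fin p) (x y : X),
    (∃ k < n, ω k ≠ ω' k) →
    (1 : ℝ) ≤ dynDist (List.replicate n (skewProduct g)) (ω, x) (ω', y)
  | 0, _, _, _, _, ⟨k, hk, _⟩ => absurd hk (Nat.not_lt_zero k)
  | (n + 1), ω, ω', x, y, ⟨k, hk, hne⟩ => by
      rw [List.replicate_succ]
      show (1 : ℝ) ≤ max (dist (ω, x) (ω', y))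
        (dynDist (List.replicate n (skewProduct g)) (skewProduct g (ω, x))
          (skewProduct g (ω', y)))
      rcases k with _ | j
      · refine le_trans (one_le_piNat_dist hne) (le_trans ?_ (le_max_left _ _))
        rw [Prod.dist_eq]
        exact le_max_left _ _
      · have h1 := one_le_skewDyn n (fun m => ω (m + 1)) (fun m => ω' (m + 1))
          (g (ω 0) x) (g (ω' 0) y) ⟨j, by omega, hne⟩
        exact le_trans h1 (le_max_right _ _)

lemma skewDyn_le_trunc : ∀ (n : ℕ) (m : ℕ) (ω ω' : ℕ → Fin p) (x y : X),
    (∀ i < n + m, ω i = ω' i) →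
    dynDist (List.replicate n (skewProduct g)) (ω, x) (ω', y)
      ≤ max ((1 / 2 : ℝ) ^ m) (dynDist (List.ofFn (fun i : Fin n => g (ω i))) x y)
  | 0, m, ω, ω', x, y, h => by
      show dist (ω, x) (ω', y) ≤ _
      rw [Prod.dist_eq]
      apply max_le
      · exact le_trans (piNat_dist_le (by simpa using h)) (le_max_left _ _)
      · exact le_max_right _ _
  | (n + 1), m, ω, ω', x, y, h => by
      rw [List.replicate_succ]
      show max (dist (ω, x) (ω', y))
          (dynDist (List.replicate n (skewProduct g)) (skewProduct g (ω, x))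
            (skewProduct g (ω', y))) ≤ _
      apply max_le
      · rw [Prod.dist_eq]
        apply max_le
        · refine le_trans (piNat_dist_le (m := m) ?_) (le_max_left _ _)
          intro i hi
          exact h i (by omega)
        · exact le_trans (dist_le_dynDist _ x y) (le_max_right _ _)
      · have hω0 : ω' 0 = ω 0 := (h 0 (by omega)).symm
        have hshift : ∀ i < n + m, (fun k => ω (k + 1)) i = (fun k => ω' (k + 1)) i :=
          fun i hi => h (i + 1) (by omega)
        have IH := skewDyn_le_trunc n m (fun k => ω (k + 1)) (fun k => ω' (k + 1))
          (g (ω 0) x) (g (ω 0) y) hshift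
        have heq : skewProduct g (ω', y) = ((fun k => ω' (k + 1)), g (ω 0) y) := by
          show ((fun k => ω' (k + 1)), g (ω' 0) y) = _
          rw [hω0]
        rw [heq]
        refine le_trans IH (max_le_max le_rfl ?_)
        simp only [List.ofFn_succ, Fin.val_succ, Fin.val_zero]
        show dynDist (List.ofFn fun i : Fin n => g (ω (i.val + 1))) (g (ω 0) x) (g (ω 0) y)
          ≤ max (dist x y)
              (dynDist (List.ofFn fun i : Fin n => g (ω (i.val + 1))) (g (ω 0) x) (g (ω 0) y))
        exact le_max_right _ _

lemma countA [CompactSpace X] {ε : ℝ} (hε : 0 < ε) (hε1 : ε < 1) (n : ℕ) :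
    ∑ u : Fin n → Fin p, sepCard (Set.univ : Set X) ((List.ofFn u).map g) ε
      ≤ sepCard (Set.univ : Set ((ℕ → Fin p) × X)) (List.replicate n (skewProduct g)) ε := by
  classical
  have htbX : TotallyBounded (Set.univ : Set X) := isCompact_univ.totallyBounded
  have hp : 0 < p := Nat.pos_of_ne_zero (NeZero.ne p)
  have hmax : ∀ u : Fin n → Fin p, ∃ E : Finset X, ↑E ⊆ (Set.univ : Set X) ∧
      IsDynSeparated ((List.ofFn u).map g) ε (↑E : Set X) ∧
      E.card = sepCard (Set.univ : Set X) ((List.ofFn u).map g) ε :=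
    fun u => exists_maximal_sep htbX hε _ _
  choose E hE1 hE2 hE3 using hmax
  set ext : (Fin n → Fin p) → (ℕ → Fin p) :=
    fun v k => if h : k < n then v ⟨k, h⟩ else ⟨0, hp⟩ with hext
  have hextap : ∀ (v : Fin n → Fin p) (i : Fin n), ext v (i : ℕ) = v i := by
    intro v i; simp [hext, i.isLt]
  have hextinj : ∀ v v' : Fin n → Fin p, v ≠ v' → ∃ k < n, ext v k ≠ ext v' k := by
    intro v v' hvv
    obtain ⟨i, hi⟩ := Function.ne_iff.1 hvv
    exact ⟨(i : ℕ), i.isLt, by rw [hextap, hextap]; exact hi⟩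
  set S : Finset ((ℕ → Fin p) × X) :=
    Finset.univ.biUnion (fun u => (E u).image (fun z => (ext u, z))) with hS
  have hdisj : ∀ u ∈ (Finset.univ : Finset (Fin n → Fin p)), ∀ v ∈ Finset.univ, u ≠ v →
      Disjoint ((E u).image (fun z => (ext u, z))) ((E v).image (fun z => (ext v, z))) := by
    intro u _ v _ huv
    rw [Finset.disjoint_left]
    rintro a ha hb
    obtain ⟨z, _, rfl⟩ := Finset.mem_image.1 ha
    obtain ⟨z', _, he⟩ := Finset.mem_image.1 hb
    obtain ⟨k, _, hne⟩ := hextinj v u (Ne.symm huv)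
    exact hne (congrFun (congrArg Prod.fst he) k)
  have hword : ∀ u : Fin n → Fin p,
      (List.ofFn u).map g = List.ofFn (fun i : Fin n => g (ext u (i : ℕ))) := by
    intro u
    rw [List.map_ofFn]
    congr 1
    funext i
    simp [Function.comp, hextap]
  have hsep : IsDynSeparated (List.replicate n (skewProduct g)) ε (↑S : Set _) := by
    intro a ha b hb hab
    obtain ⟨u, _, ha2⟩ := Finset.mem_biUnion.1 (Finset.mem_coe.1 ha)
    obtain ⟨v, _, hb2⟩ := Finset.mem_biUnion.1 (Finset.mem_coe.1 hb)
    obtain ⟨z, hz, rfl⟩ := Finset.mem_image.1 ha2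
    obtain ⟨z', hz', rfl⟩ := Finset.mem_image.1 hb2
    by_cases huv : u = v
    · subst huv
      have hzz : z ≠ z' := fun h => hab (by rw [h])
      have h1 := hE2 u (Finset.mem_coe.2 hz) (Finset.mem_coe.2 hz') hzz
      rw [hword u] at h1
      exact h1.trans_le (dynDist_word_le_skew g n (ext u) z z')
    · have h1 := one_le_skewDyn g n (ext u) (ext v) z z' (hextinj u v huv)
      exact lt_of_lt_of_le hε1 h1
  have hcard : S.card = ∑ u : Fin n → Fin p,
      sepCard (Set.univ : Set X) ((List.ofFn u).map g) ε := by
    rw [hS, Finset.card_biUnion hdisj]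
    refine Finset.sum_congr rfl (fun u _ => ?_)
    rw [Finset.card_image_of_injective _ (fun z z' h => by
      simpa using (Prod.mk.injEq _ _ _ _ ▸ h : (ext u, z) = (ext u, z'))), hE3]
  exact le_sepCard tb_Y hε ⟨S, Set.subset_univ _, hsep, hcard⟩

lemma countB [CompactSpace X] {K : Set X} {ε : ℝ} (hε : 0 < ε) {m : ℕ}
    (hm : (1 / 2 : ℝ) ^ m < ε) (n : ℕ) :
    sepCard ((Set.univ : Set (ℕ → Fin p)) ×ˢ K) (List.replicate n (skewProduct g)) ε
      ≤ p ^ m * ∑ u : Fin n → Fin p, sepCard K ((List.ofFn u).map g) ε := by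
  classical
  have htbX : TotallyBounded (Set.univ : Set X) := isCompact_univ.totallyBounded
  apply sepCard_le
  intro Efin hEsub hEsep
  set T : ((ℕ → Fin p) × X) → (Fin (n + m) → Fin p) := fun q i => q.1 (i : ℕ) with hT
  have hcard := Finset.card_eq_sum_card_fiberwise
    (f := T) (s := Efin) (t := Finset.univ) (fun q _ => Finset.mem_univ (T q))
  have hfiber : ∀ u : Fin (n + m) → Fin p,
      ({q ∈ Efin | T q = u}).card
        ≤ sepCard K ((List.ofFn (fun i : Fin n => u (Fin.castAdd m i))).map g) ε := by
    intro u
    set s := {q ∈ Efin | T q = u} with hs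
    have hsE : ∀ q ∈ s, q ∈ Efin := fun q hq => (Finset.mem_filter.1 hq).1
    have hag : ∀ q ∈ s, ∀ q' ∈ s, ∀ i < n + m, q.1 i = q'.1 i := by
      intro q hq q' hq' i hi
      have h1 : T q = u := (Finset.mem_filter.1 hq).2
      have h2 : T q' = u := (Finset.mem_filter.1 hq').2
      exact (congrFun h1 ⟨i, hi⟩).trans (congrFun h2 ⟨i, hi⟩).symm
    have hword : ∀ q ∈ s, (List.ofFn (fun i : Fin n => u (Fin.castAdd m i))).map g
        = List.ofFn (fun i : Fin n => g (q.1 (i : ℕ))) := by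
      intro q hq
      have h1 : T q = u := (Finset.mem_filter.1 hq).2
      rw [List.map_ofFn]
      congr 1
      funext i
      have h2 : q.1 (i : ℕ) = u (Fin.castAdd m i) := by
        have h3 := congrFun h1 (Fin.castAdd m i)
        simpa [hT] using h3
      simp [Function.comp, h2]
    have htrunc : ∀ q ∈ s, ∀ q' ∈ s,
        dynDist (List.replicate n (skewProduct g)) q q'
          ≤ max ((1 / 2 : ℝ) ^ m) (dynDist (List.ofFn (fun i : Fin n => g (q.1 (i : ℕ)))) q.2 q'.2) :=
      fun q hq q' hq' => skewDyn_le_trunc g n m q.1 q'.1 q.2 q'.2 (hag q hq q' hq')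
    have hinj : Set.InjOn Prod.snd (↑s : Set ((ℕ → Fin p) × X)) := by
      intro q hq q' hq' hsnd
      by_contra hne
      have h1 : ε < dynDist (List.replicate n (skewProduct g)) q q' :=
        hEsep (Finset.mem_coe.2 (hsE q (Finset.mem_coe.1 hq)))
          (Finset.mem_coe.2 (hsE q' (Finset.mem_coe.1 hq'))) hne
      have h2 := htrunc q (Finset.mem_coe.1 hq) q' (Finset.mem_coe.1 hq')
      have h3 : dynDist (List.ofFn (fun i : Fin n => g (q.1 (i : ℕ)))) q.2 q'.2 = 0 := by
        rw [hsnd]; exact dynDist_self _ _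
      rw [h3, max_eq_left (by positivity)] at h2
      linarith
    rw [← Finset.card_image_of_injOn hinj]
    apply le_sepCard htbX hε
    refine ⟨s.image Prod.snd, ?_, ?_, rfl⟩
    · intro z hz
      obtain ⟨q, hq, rfl⟩ := Finset.mem_image.1 (Finset.mem_coe.1 hz)
      exact (hEsub (Finset.mem_coe.2 (hsE q hq))).2
    · intro a ha b hb hab
      obtain ⟨q, hq, rfl⟩ := Finset.mem_image.1 (Finset.mem_coe.1 ha)
      obtain ⟨q', hq', rfl⟩ := Finset.mem_image.1 (Finset.mem_coe.1 hb)
      have hne : q ≠ q' := fun h => hab (by rw [h])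
      have h1 : ε < dynDist (List.replicate n (skewProduct g)) q q' :=
        hEsep (Finset.mem_coe.2 (hsE q hq)) (Finset.mem_coe.2 (hsE q' hq')) hne
      have h2 := (htrunc q hq q' hq')
      rcases lt_max_iff.1 (h1.trans_le h2) with h | h
      · exact absurd h (not_lt.2 hm.le)
      · rw [hword q hq]
        exact h
  calc Efin.card = ∑ u : Fin (n + m) → Fin p, ({q ∈ Efin | T q = u}).card := hcard
    _ ≤ ∑ u : Fin (n + m) → Fin p,
          sepCard K ((List.ofFn (fun i : Fin n => u (Fin.castAdd m i))).map g) ε :=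
        Finset.sum_le_sum (fun u _ => hfiber u)
    _ = p ^ m * ∑ v : Fin n → Fin p, sepCard K ((List.ofFn v).map g) ε := by
        let e : (Fin (n + m) → Fin p) ≃ ((Fin n → Fin p) × (Fin m → Fin p)) :=
          (Equiv.arrowCongr finSumFinEquiv.symm (Equiv.refl (Fin p))).trans
            (Equiv.sumArrowEquivProdArrow _ _ _)
        have harg : ∀ u : Fin (n + m) → Fin p,
            ((e u).1 : Fin n → Fin p) = fun i : Fin n => u (Fin.castAdd m i) := fun u => rfl
        rw [Fintype.sum_equiv e
          (fun u => sepCard K ((List.ofFn (fun i : Fin n => u (Fin.castAdd m i))).map g) ε)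
          (fun q => sepCard K ((List.ofFn q.1).map g) ε)
          (fun u => congrArg (fun v : Fin n → Fin p => sepCard K ((List.ofFn v).map g) ε) (harg u).symm)]
        rw [Fintype.sum_prod_type]
        simp only [Finset.sum_const, Finset.card_univ, smul_eq_mul]
        rw [Finset.mul_sum]
        refine Finset.sum_congr rfl (fun v _ => ?_)
        congr 1
        simp [Fintype.card_fun]

lemma one_le_SepSum [CompactSpace X] {K : Set X} (hK : K.Nonempty) {ε : ℝ} (hε : 0 < ε)
    (n : ℕ) : 1 ≤ SepSum g K n ε := by
  have htbX : TotallyBounded (Set.univ : Set X) := isCompact_univ.totallyBounded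
  have hp : 0 < p := Nat.pos_of_ne_zero (NeZero.ne p)
  have hpn : (0 : ℝ) < (p : ℝ) ^ n := by positivity
  rw [SepSum, one_div, inv_mul_eq_div, le_div_iff₀ hpn, one_mul]
  calc ((p : ℝ)) ^ n = ∑ _u : Fin n → Fin p, (1 : ℝ) := by
        rw [Finset.sum_const, Finset.card_univ]
        simp [Fintype.card_fun]
    _ ≤ ∑ u : Fin n → Fin p, ((sepCard K ((List.ofFn u).map g) ε : ℕ) : ℝ) :=
        Finset.sum_le_sum (fun u _ => by
          exact_mod_cast one_le_sepCard htbX hε hK _)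

lemma sum_sepCard_eq [CompactSpace X] (K : Set X) (ε : ℝ) (n : ℕ) :
    ∑ u : Fin n → Fin p, ((sepCard K ((List.ofFn u).map g) ε : ℕ) : ℝ)
      = (p : ℝ) ^ n * SepSum g K n ε := by
  have hp : 0 < p := Nat.pos_of_ne_zero (NeZero.ne p)
  have hpn : ((p : ℝ)) ^ n ≠ 0 := by positivity
  rw [SepSum]
  field_simp

lemma SepSum_mono_eps [CompactSpace X] {K : Set X} {ε ε' : ℝ} (hε' : 0 < ε') (h : ε' ≤ ε)
    (n : ℕ) : SepSum g K n ε ≤ SepSum g K n ε' := by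
  have htbX : TotallyBounded (Set.univ : Set X) := isCompact_univ.totallyBounded
  rw [SepSum, SepSum]
  refine mul_le_mul_of_nonneg_left ?_ (by positivity)
  exact Finset.sum_le_sum (fun u _ => by exact_mod_cast sepCard_anti htbX hε' h K _)

lemma SepSum_mono_set [CompactSpace X] {K K' : Set X} {ε : ℝ} (hε : 0 < ε) (h : K ⊆ K')
    (n : ℕ) : SepSum g K n ε ≤ SepSum g K' n ε := by
  have htbX : TotallyBounded (Set.univ : Set X) := isCompact_univ.totallyBounded
  rw [SepSum, SepSum]
  refine mul_le_mul_of_nonneg_left ?_ (by positivity)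
  exact Finset.sum_le_sum (fun u _ => by exact_mod_cast sepCard_mono htbX hε h _)

lemma SepRate_anti [CompactSpace X] {K : Set X} (hK : K.Nonempty) {ε ε' : ℝ}
    (hε' : 0 < ε') (h : ε' ≤ ε) : SepRate g K ε ≤ SepRate g K ε' := by
  have hε : 0 < ε := lt_of_lt_of_le hε' h
  apply Filter.limsup_le_limsup (Filter.Eventually.of_forall (fun n => ?_))
  apply EReal.coe_le_coe_iff.2
  rcases Nat.eq_zero_or_pos n with rfl | hn
  · simp
  · have h1 : (0 : ℝ) < SepSum g K n ε := lt_of_lt_of_le one_pos (one_le_SepSum g hK hε n)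
    have h2 : Real.log (SepSum g K n ε) ≤ Real.log (SepSum g K n ε') :=
      Real.log_le_log h1 (SepSum_mono_eps g hε' h n)
    exact (div_le_div_iff_of_pos_right (by exact_mod_cast hn)).2 h2

lemma SepRate_mono_set [CompactSpace X] {K K' : Set X} (hK : K.Nonempty) {ε : ℝ}
    (hε : 0 < ε) (h : K ⊆ K') : SepRate g K ε ≤ SepRate g K' ε := by
  apply Filter.limsup_le_limsup (Filter.Eventually.of_forall (fun n => ?_))
  apply EReal.coe_le_coe_iff.2
  rcases Nat.eq_zero_or_pos n with rfl | hn
  · simp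
  · have h1 : (0 : ℝ) < SepSum g K n ε := lt_of_lt_of_le one_pos (one_le_SepSum g hK hε n)
    have h2 : Real.log (SepSum g K n ε) ≤ Real.log (SepSum g K' n ε) :=
      Real.log_le_log h1 (SepSum_mono_set g hε h n)
    exact (div_le_div_iff_of_pos_right (by exact_mod_cast hn)).2 h2

lemma rateB [CompactSpace X] {K : Set X} (hK : K.Nonempty) {ε : ℝ} (hε : 0 < ε) :
    mapSepRate (skewProduct g) ((Set.univ : Set (ℕ → Fin p)) ×ˢ K) ε
      ≤ (Real.log p : EReal) + SepRate g K ε := by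
  obtain ⟨m, hm⟩ := exists_pow_lt_of_lt_one hε (by norm_num : (1 / 2 : ℝ) < 1)
  have hp : 0 < p := Nat.pos_of_ne_zero (NeZero.ne p)
  have hp1 : (1 : ℝ) ≤ (p : ℝ) := by exact_mod_cast hp
  haveI : Nonempty (Fin p) := ⟨⟨0, hp⟩⟩
  have hYne : ((Set.univ : Set (ℕ → Fin p)) ×ˢ K).Nonempty :=
    Set.univ_nonempty.prod hK
  have key : ∀ n : ℕ, 1 ≤ n →
      Real.log ((sepCard ((Set.univ : Set (ℕ → Fin p)) ×ˢ K)
          (List.replicate n (skewProduct g)) ε : ℕ) : ℝ) / n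
        ≤ (m : ℝ) * Real.log p / n + (Real.log p + Real.log (SepSum g K n ε) / n) := by
    intro n hn
    have hnR : (0 : ℝ) < n := by exact_mod_cast hn
    set A : ℝ := ((sepCard ((Set.univ : Set (ℕ → Fin p)) ×ˢ K)
      (List.replicate n (skewProduct g)) ε : ℕ) : ℝ) with hA
    have hA1 : (1 : ℝ) ≤ A := by
      rw [hA]; exact_mod_cast one_le_sepCard tb_Y hε hYne _
    have hS1 : (1 : ℝ) ≤ SepSum g K n ε := one_le_SepSum g hK hε n
    have hcount : A ≤ (p : ℝ) ^ m * ((p : ℝ) ^ n * SepSum g K n ε) := by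
      have h1 := countB g (K := K) hε hm n
      calc A ≤ ((p ^ m * ∑ u : Fin n → Fin p, sepCard K ((List.ofFn u).map g) ε : ℕ) : ℝ) := by
            rw [hA]; exact_mod_cast h1
        _ = (p : ℝ) ^ m * ∑ u : Fin n → Fin p, ((sepCard K ((List.ofFn u).map g) ε : ℕ) : ℝ) := by
            push_cast; ring
        _ = _ := by rw [sum_sepCard_eq]
    have hlog : Real.log A ≤ (m : ℝ) * Real.log p + ((n : ℝ) * Real.log p
        + Real.log (SepSum g K n ε)) := by
      have h2 := Real.log_le_log (by linarith : (0 : ℝ) < A) hcount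
      rwa [Real.log_mul (by positivity) (by positivity),
        Real.log_mul (by positivity) (by positivity : (SepSum g K n ε) ≠ 0),
        Real.log_pow, Real.log_pow] at h2
    have hn0 : (n : ℝ) ≠ 0 := hnR.ne'
    calc Real.log A / n
        ≤ ((m : ℝ) * Real.log p + ((n : ℝ) * Real.log p + Real.log (SepSum g K n ε))) / n :=
          (div_le_div_iff_of_pos_right hnR).2 hlog
      _ = (m : ℝ) * Real.log p / n + (Real.log p + Real.log (SepSum g K n ε) / n) := by
          field_simp
  set a : ℕ → EReal := fun n => ((Real.log ((sepCard ((Set.univ : Set (ℕ → Fin p)) ×ˢ K)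
    (List.replicate n (skewProduct g)) ε : ℕ) : ℝ) / n : ℝ) : EReal) with ha
  set b : ℕ → EReal := fun n => ((Real.log (SepSum g K n ε) / n : ℝ) : EReal) with hb
  set u : ℕ → EReal := fun n => (((m : ℝ) * Real.log p / n : ℝ) : EReal) with hu
  set v : ℕ → EReal := (fun _ : ℕ => (Real.log p : EReal)) + b with hv
  have hlim1 : Filter.limsup u Filter.atTop = (0 : EReal) := by
    have h1 : Filter.Tendsto u Filter.atTop (nhds (((0 : ℝ) : EReal))) :=
      (EReal.tendsto_coe).2 (tendsto_const_div_atTop_nhds_zero_nat _)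
    simpa using h1.limsup_eq
  have step1 : Filter.limsup a Filter.atTop ≤ Filter.limsup (u + v) Filter.atTop := by
    have hev : ∀ᶠ n in Filter.atTop, a n ≤ (u + v) n := by
      filter_upwards [Filter.eventually_ge_atTop 1] with n hn
      show a n ≤ u n + ((Real.log p : EReal) + b n)
      calc a n ≤ (((m : ℝ) * Real.log p / n + (Real.log p + Real.log (SepSum g K n ε) / n) : ℝ)
            : EReal) := EReal.coe_le_coe_iff.2 (key n hn)
        _ = u n + ((Real.log p : EReal) + b n) := by
            rw [EReal.coe_add, EReal.coe_add]
    exact Filter.limsup_le_limsup hev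
  have step2 : Filter.limsup (u + v) Filter.atTop
      ≤ Filter.limsup u Filter.atTop + Filter.limsup v Filter.atTop := by
    apply EReal.limsup_add_le
    · left; rw [hlim1]; simp
    · left; rw [hlim1]; simp
  have step3 : Filter.limsup v Filter.atTop
      ≤ (Real.log p : EReal) + Filter.limsup b Filter.atTop := by
    refine le_trans (EReal.limsup_add_le ?_ ?_) ?_
    · left; rw [Filter.limsup_const]; exact EReal.coe_ne_bot _
    · left; rw [Filter.limsup_const]; exact EReal.coe_ne_top _
    · rw [Filter.limsup_const]
  calc mapSepRate (skewProduct g) ((Set.univ : Set (ℕ → Fin p)) ×ˢ K) ε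
      = Filter.limsup a Filter.atTop := rfl
    _ ≤ Filter.limsup u Filter.atTop + Filter.limsup v Filter.atTop := step1.trans step2
    _ = Filter.limsup v Filter.atTop := by rw [hlim1, zero_add]
    _ ≤ (Real.log p : EReal) + SepRate g K ε := step3

lemma rateA [CompactSpace X] [Nonempty X] {ε : ℝ} (hε : 0 < ε) (hε1 : ε < 1) :
    (Real.log p : EReal) + SepRate g (Set.univ : Set X) ε
      ≤ mapSepRate (skewProduct g) (Set.univ : Set ((ℕ → Fin p) × X)) ε := by
  have hp : 0 < p := Nat.pos_of_ne_zero (NeZero.ne p)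
  have huniv : (Set.univ : Set X).Nonempty := Set.univ_nonempty
  have key : ∀ n : ℕ, 1 ≤ n →
      Real.log (SepSum g Set.univ n ε) / n + Real.log p
        ≤ Real.log ((sepCard (Set.univ : Set ((ℕ → Fin p) × X))
            (List.replicate n (skewProduct g)) ε : ℕ) : ℝ) / n := by
    intro n hn
    have hnR : (0 : ℝ) < n := by exact_mod_cast hn
    have hS1 : (1 : ℝ) ≤ SepSum g Set.univ n ε := one_le_SepSum g huniv hε n
    set A : ℝ := ((sepCard (Set.univ : Set ((ℕ → Fin p) × X))
      (List.replicate n (skewProduct g)) ε : ℕ) : ℝ) with hA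
    have hcount : (p : ℝ) ^ n * SepSum g Set.univ n ε ≤ A := by
      rw [← sum_sepCard_eq, hA]
      exact_mod_cast countA g hε hε1 n
    have hlog : (n : ℝ) * Real.log p + Real.log (SepSum g Set.univ n ε) ≤ Real.log A := by
      have h2 := Real.log_le_log (by positivity) hcount
      rwa [Real.log_mul (by positivity) (by positivity : (SepSum g Set.univ n ε) ≠ 0),
        Real.log_pow] at h2
    have hn0 : (n : ℝ) ≠ 0 := hnR.ne'
    calc Real.log (SepSum g Set.univ n ε) / n + Real.log p
        = ((n : ℝ) * Real.log p + Real.log (SepSum g Set.univ n ε)) / n := by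
          field_simp
          ring
      _ ≤ Real.log A / n := (div_le_div_iff_of_pos_right hnR).2 hlog
  set a : ℕ → EReal := fun n => ((Real.log ((sepCard (Set.univ : Set ((ℕ → Fin p) × X))
    (List.replicate n (skewProduct g)) ε : ℕ) : ℝ) / n : ℝ) : EReal) with ha
  set b : ℕ → EReal := fun n => ((Real.log (SepSum g Set.univ n ε) / n : ℝ) : EReal) with hb
  have hs := EReal.le_limsup_add (u := b) (v := fun _ : ℕ => (Real.log p : EReal))
    (f := Filter.atTop)
  rw [Filter.liminf_const] at hs
  have step : Filter.limsup (b + fun _ : ℕ => (Real.log p : EReal)) Filter.atTop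
      ≤ Filter.limsup a Filter.atTop := by
    have hev : ∀ᶠ n in Filter.atTop, (b + fun _ : ℕ => (Real.log p : EReal)) n ≤ a n := by
      filter_upwards [Filter.eventually_ge_atTop 1] with n hn
      show b n + (Real.log p : EReal) ≤ a n
      calc b n + (Real.log p : EReal)
          = ((Real.log (SepSum g Set.univ n ε) / n + Real.log p : ℝ) : EReal) := by
            rw [EReal.coe_add]
        _ ≤ a n := EReal.coe_le_coe_iff.2 (key n hn)
    exact Filter.limsup_le_limsup hev
  calc (Real.log p : EReal) + SepRate g (Set.univ : Set X) ε
      = Filter.limsup b Filter.atTop + (Real.log p : EReal) := add_comm _ _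
    _ ≤ Filter.limsup (b + fun _ : ℕ => (Real.log p : EReal)) Filter.atTop := hs
    _ ≤ Filter.limsup a Filter.atTop := step
    _ = mapSepRate (skewProduct g) (Set.univ : Set ((ℕ → Fin p) × X)) ε := rfl

lemma entropyA [CompactSpace X] [Nonempty X] :
    semigroupEntropy g (Set.univ : Set X) + (Real.log p : EReal)
      ≤ mapEntropy (skewProduct g) (Set.univ : Set ((ℕ → Fin p) × X)) := by
  have huniv : (Set.univ : Set X).Nonempty := Set.univ_nonempty
  rw [← EReal.le_sub_iff_add_le (Or.inl (EReal.coe_ne_bot _)) (Or.inl (EReal.coe_ne_top _))]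
  rw [semigroupEntropy]
  apply iSup_le
  rintro ⟨ε, hε⟩
  have hε2 : 0 < min ε (1 / 2) := lt_min hε (by norm_num)
  have h1 : SepRate g (Set.univ : Set X) ε ≤ SepRate g (Set.univ : Set X) (min ε (1 / 2)) :=
    SepRate_anti g huniv hε2 (min_le_left _ _)
  refine h1.trans ?_
  rw [EReal.le_sub_iff_add_le (Or.inl (EReal.coe_ne_bot _)) (Or.inl (EReal.coe_ne_top _))]
  rw [add_comm]
  refine le_trans (rateA g hε2 (lt_of_le_of_lt (min_le_right _ _) (by norm_num))) ?_
  exact le_iSup (fun e : {ε : ℝ // 0 < ε} =>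
    mapSepRate (skewProduct g) (Set.univ : Set ((ℕ → Fin p) × X)) (e : ℝ)) ⟨min ε (1 / 2), hε2⟩

lemma entropyB [CompactSpace X] {K : Set X} (hK : K.Nonempty) :
    mapEntropy (skewProduct g) ((Set.univ : Set (ℕ → Fin p)) ×ˢ K)
      ≤ semigroupEntropy g K + (Real.log p : EReal) := by
  rw [mapEntropy]
  apply iSup_le
  rintro ⟨ε, hε⟩
  refine le_trans (rateB g hK hε) ?_
  rw [add_comm]
  exact add_le_add_left (le_iSup (fun e : {ε : ℝ // 0 < ε} => SepRate g K (e : ℝ)) ⟨ε, hε⟩) _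

end Skew

end EntropyAux

end Aux

/-- if `(ω, x)` is a full entropy point of the skew-product `F_G`, then `x` is a
full entropy point of the semigroup action `𝕊`. -/
theorem fullEntropyPoint_of_skewProduct [CompactSpace X] {p : ℕ} [NeZero p]
    (g : Fin p → X → X) (hg : ∀ i, Continuous (g i)) (ω : ℕ → Fin p) (x : X)
    (hfull : ∀ N : Set ((ℕ → Fin p) × X), N ∈ nhds (ω, x) → IsClosed N →
      mapEntropy (skewProduct g) N = mapEntropy (skewProduct g) Set.univ) :
    IsFullEntropyPoint g x := by
  classical
  intro K hK hKc
  have hxK : x ∈ K := mem_of_mem_nhds hK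
  have hKne : K.Nonempty := ⟨x, hxK⟩
  haveI : Nonempty X := ⟨x⟩
  apply le_antisymm
  · exact iSup_mono (fun e : {ε : ℝ // 0 < ε} =>
      EntropyAux.SepRate_mono_set g hKne e.2 (Set.subset_univ K))
  · have hN : (Set.univ : Set (ℕ → Fin p)) ×ˢ K ∈ nhds (ω, x) :=
      prod_mem_nhds Filter.univ_mem hK
    have hNc : IsClosed ((Set.univ : Set (ℕ → Fin p)) ×ˢ K) := isClosed_univ.prod hKc
    have hkey := hfull _ hN hNc
    have h2 := EntropyAux.entropyB g hKne
    rw [hkey] at h2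
    have h3 := (EntropyAux.entropyA g).trans h2
    have h4 := (EReal.le_sub_iff_add_le (Or.inl (EReal.coe_ne_bot _))
      (Or.inl (EReal.coe_ne_top _))).2 h3
    rwa [EReal.add_sub_cancel_right] at h4
end
end

section
/- Let G₁ = {id, f, g} where f, g act on X = X₁ ∪ X₂ (disjoint compact metric spaces) with f|_{X₂} = g|_{X₂} = id_{X₂}, f|_{X₁} = f₁, g|_{X₁} = g₁. Then the topological entropy of the free semigroup action S generated by {f, g} on X equals the topological entropy of the free semigroup action generated by {f₁, g₁} on X₁, and every entropy point of S lies in X₁. -/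
open Set Filter Topology

noncomputable section

variable {X Y : Type*} [MetricSpace X] [MetricSpace Y]

variable {p : ℕ}

attribute [local instance] PiNat.metricSpace

section MyAux

variable {X : Type*} [MetricSpace X]

lemma myDynDist_self : ∀ (w : List (X → X)) (x : X), dynDist w x x = 0
  | [], x => by simp [dynDist]
  | F :: w, x => by simp [dynDist, myDynDist_self w (F x)]

lemma myDynDist_eq_dist : ∀ (w : List (X → X)) (x y : X),
    (∀ F ∈ w, F x = x) → (∀ F ∈ w, F y = y) → dynDist w x y = dist x y
  | [], x, y, _, _ => rfl
  | F :: w, x, y, hx, hy => by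
    have hFx : F x = x := hx F List.mem_cons_self
    have hFy : F y = y := hy F List.mem_cons_self
    have ih := myDynDist_eq_dist w x y (fun G hG => hx G (List.mem_cons_of_mem _ hG))
      (fun G hG => hy G (List.mem_cons_of_mem _ hG))
    simp [dynDist, hFx, hFy, ih]

lemma myExists_center [CompactSpace X] {ε : ℝ} (hε : 0 < ε) :
    ∃ (t : Finset X) (c : X → X), ∀ x : X, c x ∈ t ∧ dist x (c x) < ε / 2 := by
  rcases isEmpty_or_nonempty X with h | h
  · exact ⟨∅, fun x => x, fun x => (IsEmpty.false x).elim⟩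
  have hcov : (Set.univ : Set X) ⊆ ⋃ x : X, Metric.ball x (ε / 2) := by
    intro x _
    exact Set.mem_iUnion.mpr ⟨x, Metric.mem_ball_self (by linarith)⟩
  obtain ⟨t, ht⟩ := isCompact_univ.elim_finite_subcover
    (fun x : X => Metric.ball x (ε / 2)) (fun x => Metric.isOpen_ball) hcov
  have hc : ∀ x : X, ∃ y, y ∈ t ∧ dist x y < ε / 2 := by
    intro x
    have := ht (Set.mem_univ x)
    simp only [Set.mem_iUnion, Metric.mem_ball] at this
    obtain ⟨y, hyt, hxy⟩ := this
    exact ⟨y, hyt, hxy⟩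
  choose c hc1 hc2 using hc
  exact ⟨t, c, fun x => ⟨hc1 x, hc2 x⟩⟩

lemma myCard_le_pow {ε : ℝ} (t : Finset X) (c : X → X)
    (hc : ∀ x : X, c x ∈ t ∧ dist x (c x) < ε / 2) :
    ∀ (w : List (X → X)) (E : Finset X), IsDynSeparated w ε (↑E : Set X) →
      E.card ≤ t.card ^ (w.length + 1) := by
  intro w
  induction w with
  | nil =>
    intro E hsep
    rw [List.length_nil, zero_add, pow_one]
    apply Finset.card_le_card_of_injOn c (fun x _ => (hc x).1)
    intro x hx y hy hxy
    by_contra hne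
    have hd : ε < dist x y := hsep (Finset.mem_coe.mpr hx) (Finset.mem_coe.mpr hy) hne
    have : dist x y ≤ dist x (c x) + dist y (c y) := by
      rw [hxy]; exact dist_triangle_right x y (c y)
    have := (hc x).2
    have := (hc y).2
    linarith
  | cons F w ih =>
    intro E hsep
    classical
    have key : ∀ x ∈ E, ∀ y ∈ E, c x = c y → x ≠ y →
        ε < dynDist w (F x) (F y) ∧ F x ≠ F y := by
      intro x hx y hy hcxy hne
      have hd : dist x y < ε := by
        have h1 : dist x y ≤ dist x (c x) + dist y (c y) := by
          rw [hcxy]; exact dist_triangle_right x y (c y)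
        have := (hc x).2; have := (hc y).2; linarith
      have hsep' : ε < max (dist x y) (dynDist w (F x) (F y)) :=
        hsep (Finset.mem_coe.mpr hx) (Finset.mem_coe.mpr hy) hne
      have hdyn : ε < dynDist w (F x) (F y) := by
        rcases max_cases (dist x y) (dynDist w (F x) (F y)) with ⟨heq, _⟩ | ⟨heq, _⟩
        · rw [heq] at hsep'; linarith
        · rwa [heq] at hsep'
      refine ⟨hdyn, fun hFxy => ?_⟩
      rw [hFxy, myDynDist_self] at hdyn
      have := dist_nonneg (x := x) (y := y)
      linarith
    rw [Finset.card_eq_sum_card_fiberwise (f := c) (t := t) (fun x _ => (hc x).1)]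
    have hb : ∀ b ∈ t, (E.filter fun x => c x = b).card ≤ t.card ^ (w.length + 1) := by
      intro b _
      set Eb := E.filter fun x => c x = b with hEb
      have hmem : ∀ x ∈ Eb, x ∈ E ∧ c x = b := by
        intro x hx; exact Finset.mem_filter.mp hx
      have hinj : Set.InjOn F ↑Eb := by
        intro x hx y hy hFxy
        by_contra hne
        obtain ⟨hxE, hxb⟩ := hmem x (Finset.mem_coe.mp hx)
        obtain ⟨hyE, hyb⟩ := hmem y (Finset.mem_coe.mp hy)
        exact (key x hxE y hyE (hxb.trans hyb.symm) hne).2 hFxy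
      have hsepb : IsDynSeparated w ε (↑(Eb.image F) : Set X) := by
        intro a ha b' hb' hab
        rw [Finset.coe_image] at ha hb'
        obtain ⟨x, hx, rfl⟩ := ha
        obtain ⟨y, hy, rfl⟩ := hb'
        obtain ⟨hxE, hxb⟩ := hmem x (Finset.mem_coe.mp hx)
        obtain ⟨hyE, hyb⟩ := hmem y (Finset.mem_coe.mp hy)
        have hne : x ≠ y := fun h => hab (by rw [h])
        exact (key x hxE y hyE (hxb.trans hyb.symm) hne).1
      have := ih (Eb.image F) hsepb
      rwa [Finset.card_image_of_injOn hinj] at this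
    calc (∑ b ∈ t, (E.filter fun x => c x = b).card)
        ≤ ∑ _b ∈ t, t.card ^ (w.length + 1) := Finset.sum_le_sum hb
      _ = t.card * t.card ^ (w.length + 1) := by rw [Finset.sum_const, smul_eq_mul]
      _ = t.card ^ (List.length (F :: w) + 1) := by
          rw [List.length_cons, pow_succ, pow_succ]; ring

end MyAux

section MyAux2

variable {X : Type*} [MetricSpace X]

def mySepSet (K : Set X) (w : List (X → X)) (ε : ℝ) : Set ℕ :=
  {n | ∃ E : Finset X, ↑E ⊆ K ∧ IsDynSeparated w ε (↑E : Set X) ∧ E.card = n}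

lemma mySepCard_eq (K : Set X) (w : List (X → X)) (ε : ℝ) :
    sepCard K w ε = sSup (mySepSet K w ε) := rfl

lemma mySepSet_nonempty (K : Set X) (w : List (X → X)) (ε : ℝ) :
    (mySepSet K w ε).Nonempty :=
  ⟨0, ∅, by simp, by simp [IsDynSeparated], by simp⟩

lemma mySepSet_bddAbove [CompactSpace X] {ε : ℝ} (hε : 0 < ε) (K : Set X) (w : List (X → X)) :
    BddAbove (mySepSet K w ε) := by
  obtain ⟨t, c, hc⟩ := myExists_center (X := X) hε
  refine ⟨t.card ^ (w.length + 1), ?_⟩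
  rintro n ⟨E, -, hsep, rfl⟩
  exact myCard_le_pow t c hc w E hsep

lemma mySepCard_mono [CompactSpace X] {ε : ℝ} (hε : 0 < ε) {K K' : Set X} (h : K ⊆ K')
    (w : List (X → X)) : sepCard K w ε ≤ sepCard K' w ε := by
  apply csSup_le_csSup (mySepSet_bddAbove hε K' w) (mySepSet_nonempty K w ε)
  rintro n ⟨E, hEK, hsep, rfl⟩
  exact ⟨E, hEK.trans h, hsep, rfl⟩

lemma myOne_le_sepCard [CompactSpace X] {ε : ℝ} (hε : 0 < ε) {K : Set X} (hK : K.Nonempty)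
    (w : List (X → X)) : 1 ≤ sepCard K w ε := by
  obtain ⟨x, hx⟩ := hK
  apply le_csSup (mySepSet_bddAbove hε K w)
  exact ⟨{x}, by simpa using hx, by simp [IsDynSeparated], by simp⟩

lemma myIsDynSeparated_iff {K E : Set X} (hE : E ⊆ K) (w : List (X → X))
    (hw : ∀ F ∈ w, ∀ x ∈ K, F x = x) (ε : ℝ) :
    IsDynSeparated w ε E ↔ IsDynSeparated [] ε E := by
  have key : ∀ x ∈ E, ∀ y ∈ E, dynDist w x y = dynDist [] x y := by
    intro x hx y hy
    show dynDist w x y = dist x y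
    exact myDynDist_eq_dist w x y (fun F hF => hw F hF x (hE hx)) (fun F hF => hw F hF y (hE hy))
  constructor <;> intro h x hx y hy hne
  · rw [← key x hx y hy]; exact h hx hy hne
  · rw [key x hx y hy]; exact h hx hy hne

lemma mySepCard_eq_of_fixed (K : Set X) {w : List (X → X)}
    (hw : ∀ F ∈ w, ∀ x ∈ K, F x = x) (ε : ℝ) :
    sepCard K w ε = sepCard K [] ε := by
  rw [mySepCard_eq, mySepCard_eq]
  congr 1
  ext n
  constructor <;> rintro ⟨E, hEK, hsep, rfl⟩
  · exact ⟨E, hEK, (myIsDynSeparated_iff hEK w hw ε).mp hsep, rfl⟩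
  · exact ⟨E, hEK, (myIsDynSeparated_iff hEK w hw ε).mpr hsep, rfl⟩

lemma mySepSum_const_of_fixed {p : ℕ} (hp : 0 < p) (gs : Fin p → X → X) (K : Set X)
    (hfix : ∀ i, ∀ x ∈ K, gs i x = x) (n : ℕ) (ε : ℝ) :
    SepSum gs K n ε = (sepCard K [] ε : ℝ) := by
  unfold SepSum
  have hw : ∀ (u : Fin n → Fin p), sepCard K ((List.ofFn u).map gs) ε = sepCard K [] ε := by
    intro u
    apply mySepCard_eq_of_fixed
    intro F hF x hx
    obtain ⟨i, -, rfl⟩ := List.mem_map.mp hF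
    exact hfix i x hx
  rw [Finset.sum_congr rfl fun u _ => by rw [hw u]]
  rw [Finset.sum_const, Finset.card_univ, Fintype.card_fun, Fintype.card_fin, Fintype.card_fin,
    nsmul_eq_mul]
  have hpn : ((p : ℝ)) ^ n ≠ 0 := by positivity
  push_cast
  field_simp

lemma mySepRate_zero_of_fixed {p : ℕ} (hp : 0 < p) (gs : Fin p → X → X) (K : Set X)
    (hfix : ∀ i, ∀ x ∈ K, gs i x = x) (ε : ℝ) : SepRate gs K ε = 0 := by
  unfold SepRate
  have h0 : Tendsto (fun n : ℕ => Real.log (sepCard K [] ε : ℝ) / n) atTop (nhds 0) :=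
    tendsto_const_div_atTop_nhds_zero_nat _
  have h1 : Tendsto (fun n : ℕ => ((Real.log (SepSum gs K n ε) / n : ℝ) : EReal)) atTop
      (nhds ((0 : ℝ) : EReal)) := by
    apply Filter.Tendsto.comp (continuous_coe_real_ereal.tendsto 0)
    simpa only [mySepSum_const_of_fixed hp gs K hfix] using h0
  rw [h1.limsup_eq, EReal.coe_zero]

lemma mySemigroupEntropy_zero_of_fixed {p : ℕ} (hp : 0 < p) (gs : Fin p → X → X) (K : Set X)
    (hfix : ∀ i, ∀ x ∈ K, gs i x = x) : semigroupEntropy gs K = 0 := by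
  unfold semigroupEntropy
  haveI : Nonempty {ε : ℝ // 0 < ε} := ⟨⟨1, one_pos⟩⟩
  simp only [mySepRate_zero_of_fixed hp gs K hfix]
  exact iSup_const

end MyAux2

section MyAux3

variable {X : Type*} [MetricSpace X]

lemma mySepCard_split [CompactSpace X] {ε : ℝ} (hε : 0 < ε)
    (X₁ X₂ : Set X) (hunion : X₁ ∪ X₂ = Set.univ)
    (t : Finset X) (c : X → X) (hc : ∀ x : X, c x ∈ t ∧ dist x (c x) < ε / 2)
    (w : List (X → X)) (hw : ∀ F ∈ w, ∀ y ∈ X₂, F y = y) :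
    sepCard Set.univ w ε ≤ sepCard X₁ w ε + t.card := by
  classical
  rw [mySepCard_eq]
  apply csSup_le (mySepSet_nonempty _ _ _)
  rintro n ⟨E, -, hsep, rfl⟩
  have hcardsplit := Finset.card_filter_add_card_filter_not
    (s := E) (p := fun x => x ∈ X₁)
  set E₁ := E.filter (fun x => x ∈ X₁) with hE₁
  set E₂ := E.filter (fun x => ¬ x ∈ X₁) with hE₂
  have h1 : E₁.card ≤ sepCard X₁ w ε := by
    apply le_csSup (mySepSet_bddAbove hε X₁ w)
    refine ⟨E₁, ?_, hsep.mono (Finset.coe_subset.mpr (Finset.filter_subset _ _)), rfl⟩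
    intro y hy
    exact (Finset.mem_filter.mp (Finset.mem_coe.mp hy)).2
  have hE₂X₂ : (↑E₂ : Set X) ⊆ X₂ := by
    intro y hy
    have hy' := Finset.mem_filter.mp (Finset.mem_coe.mp hy)
    have hmem : y ∈ X₁ ∪ X₂ := hunion ▸ Set.mem_univ y
    rcases hmem with h | h
    · exact absurd h hy'.2
    · exact h
  have hsep₂ : IsDynSeparated [] ε (↑E₂ : Set X) := by
    rw [← myIsDynSeparated_iff hE₂X₂ w (fun F hF x hx => hw F hF x hx) ε]
    exact hsep.mono (Finset.coe_subset.mpr (Finset.filter_subset _ _))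
  have h2 : E₂.card ≤ t.card := by
    have := myCard_le_pow t c hc [] E₂ hsep₂
    simpa using this
  omega

lemma mySepRate_eq {p : ℕ} [CompactSpace X] (hp : 0 < p) (gs : Fin p → X → X)
    (X₁ X₂ : Set X) (hunion : X₁ ∪ X₂ = Set.univ)
    (hfix2 : ∀ i, ∀ x ∈ X₂, gs i x = x) (hX₁ : X₁.Nonempty)
    {ε : ℝ} (hε : 0 < ε) : SepRate gs Set.univ ε = SepRate gs X₁ ε := by
  classical
  obtain ⟨t, c, hc⟩ := myExists_center (X := X) hε
  obtain ⟨x₀, hx₀⟩ := hX₁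
  have htN : 1 ≤ (t.card : ℝ) := by
    exact_mod_cast Finset.card_pos.mpr ⟨c x₀, (hc x₀).1⟩
  have hword : ∀ {n : ℕ} (u : Fin n → Fin p),
      ∀ F ∈ (List.ofFn u).map gs, ∀ y ∈ X₂, F y = y := by
    intro n u F hF y hy
    obtain ⟨i, -, rfl⟩ := List.mem_map.mp hF
    exact hfix2 i y hy
  have hppos : ∀ n : ℕ, (0:ℝ) < (p:ℝ) ^ n := fun n => by
    have : (0:ℝ) < (p:ℝ) := by exact_mod_cast hp
    positivity
  have hcardfun : ∀ n : ℕ, (Finset.univ : Finset (Fin n → Fin p)).card = p ^ n := by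
    intro n
    rw [Finset.card_univ, Fintype.card_fun, Fintype.card_fin, Fintype.card_fin]
  -- 1 ≤ A n
  have hA1 : ∀ n : ℕ, 1 ≤ SepSum gs X₁ n ε := by
    intro n
    have hsum : ((p:ℝ))^n ≤ ∑ u : Fin n → Fin p, (sepCard X₁ ((List.ofFn u).map gs) ε : ℝ) := by
      calc ((p:ℝ))^n = ∑ _u : Fin n → Fin p, (1:ℝ) := by
            rw [Finset.sum_const, hcardfun n, nsmul_eq_mul, mul_one]; push_cast; ring
        _ ≤ _ := Finset.sum_le_sum fun u _ => by
            exact_mod_cast myOne_le_sepCard hε ⟨x₀, hx₀⟩ _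
    unfold SepSum
    rw [one_div, inv_mul_eq_div, le_div_iff₀ (hppos n), one_mul]
    exact hsum
  -- A n ≤ B n
  have hAB : ∀ n : ℕ, SepSum gs X₁ n ε ≤ SepSum gs Set.univ n ε := by
    intro n
    unfold SepSum
    apply mul_le_mul_of_nonneg_left _ (le_of_lt (by rw [one_div]; exact inv_pos.mpr (hppos n)))
    apply Finset.sum_le_sum
    intro u _
    exact_mod_cast mySepCard_mono hε (Set.subset_univ X₁) _
  -- B n ≤ A n + N
  have hBA : ∀ n : ℕ, SepSum gs Set.univ n ε ≤ SepSum gs X₁ n ε + (t.card : ℝ) := by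
    intro n
    unfold SepSum
    have hstep : ∑ u : Fin n → Fin p, (sepCard Set.univ ((List.ofFn u).map gs) ε : ℝ)
        ≤ ∑ u : Fin n → Fin p, ((sepCard X₁ ((List.ofFn u).map gs) ε : ℝ) + (t.card : ℝ)) := by
      apply Finset.sum_le_sum
      intro u _
      have := mySepCard_split hε X₁ X₂ hunion t c hc _ (hword u)
      push_cast
      exact_mod_cast this
    calc (1 / (p:ℝ)^n) * ∑ u : Fin n → Fin p, (sepCard Set.univ ((List.ofFn u).map gs) ε : ℝ)
        ≤ (1 / (p:ℝ)^n) * ∑ u : Fin n → Fin p,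
            ((sepCard X₁ ((List.ofFn u).map gs) ε : ℝ) + (t.card : ℝ)) := by
          apply mul_le_mul_of_nonneg_left hstep
          rw [one_div]
          exact le_of_lt (inv_pos.mpr (hppos n))
      _ = (1 / (p:ℝ)^n) * ∑ u : Fin n → Fin p, (sepCard X₁ ((List.ofFn u).map gs) ε : ℝ)
            + (t.card : ℝ) := by
          rw [Finset.sum_add_distrib, mul_add, Finset.sum_const, hcardfun n, nsmul_eq_mul]
          congr 1
          push_cast
          field_simp
  -- positivity of B
  have hBpos : ∀ n : ℕ, (0:ℝ) < SepSum gs Set.univ n ε := fun n =>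
    lt_of_lt_of_le one_pos ((hA1 n).trans (hAB n))
  -- log bound
  have hlog : ∀ n : ℕ, Real.log (SepSum gs Set.univ n ε)
      ≤ Real.log (2 * (t.card : ℝ)) + Real.log (SepSum gs X₁ n ε) := by
    intro n
    have hB2 : SepSum gs Set.univ n ε ≤ 2 * (t.card : ℝ) * SepSum gs X₁ n ε := by
      nlinarith [hA1 n, hBA n, htN]
    have := Real.log_le_log (hBpos n) hB2
    rwa [Real.log_mul (by positivity) (by linarith [hA1 n])] at this
  -- pointwise rate bounds
  have hLM : ∀ n : ℕ, Real.log (SepSum gs Set.univ n ε) / n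
      ≤ Real.log (2 * (t.card : ℝ)) / n + Real.log (SepSum gs X₁ n ε) / n := by
    intro n
    rw [← add_div]
    rcases Nat.eq_zero_or_pos n with rfl | hn
    · simp
    · exact (div_le_div_iff_of_pos_right (by exact_mod_cast hn : (0:ℝ) < n)).mpr (hlog n)
  have hML : ∀ n : ℕ, Real.log (SepSum gs X₁ n ε) / n
      ≤ Real.log (SepSum gs Set.univ n ε) / n := by
    intro n
    rcases Nat.eq_zero_or_pos n with rfl | hn
    · simp
    · exact (div_le_div_iff_of_pos_right (by exact_mod_cast hn : (0:ℝ) < n)).mpr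
        (Real.log_le_log (by linarith [hA1 n]) (hAB n))
  -- constant sequence limsup is zero
  have hC : Filter.limsup
      (fun n : ℕ => ((Real.log (2 * (t.card : ℝ)) / n : ℝ) : EReal)) Filter.atTop = 0 := by
    have h0 := tendsto_const_div_atTop_nhds_zero_nat (Real.log (2 * (t.card : ℝ)))
    have h1 : Tendsto (fun n : ℕ => ((Real.log (2 * (t.card : ℝ)) / n : ℝ) : EReal)) atTop
        (nhds ((0:ℝ) : EReal)) := (continuous_coe_real_ereal.tendsto 0).comp h0
    rw [h1.limsup_eq, EReal.coe_zero]
  apply le_antisymm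
  · unfold SepRate
    calc Filter.limsup (fun n : ℕ => ((Real.log (SepSum gs Set.univ n ε) / n : ℝ) : EReal))
          Filter.atTop
        ≤ Filter.limsup ((fun n : ℕ => ((Real.log (2 * (t.card : ℝ)) / n : ℝ) : EReal))
            + (fun n : ℕ => ((Real.log (SepSum gs X₁ n ε) / n : ℝ) : EReal))) Filter.atTop := by
          apply Filter.limsup_le_limsup (Filter.Eventually.of_forall fun n => ?_)
          show ((Real.log (SepSum gs Set.univ n ε) / n : ℝ) : EReal)
            ≤ ((Real.log (2 * (t.card : ℝ)) / n : ℝ) : EReal)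
              + ((Real.log (SepSum gs X₁ n ε) / n : ℝ) : EReal)
          rw [← EReal.coe_add]
          exact EReal.coe_le_coe_iff.mpr (hLM n)
      _ ≤ Filter.limsup (fun n : ℕ => ((Real.log (2 * (t.card : ℝ)) / n : ℝ) : EReal))
            Filter.atTop
          + Filter.limsup (fun n : ℕ => ((Real.log (SepSum gs X₁ n ε) / n : ℝ) : EReal))
            Filter.atTop := by
          apply EReal.limsup_add_le
          · left; rw [hC]; exact (by decide)
          · left; rw [hC]; exact (by decide)
      _ = Filter.limsup (fun n : ℕ => ((Real.log (SepSum gs X₁ n ε) / n : ℝ) : EReal))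
            Filter.atTop := by rw [hC, zero_add]
  · unfold SepRate
    apply Filter.limsup_le_limsup (Filter.Eventually.of_forall fun n => ?_)
    exact EReal.coe_le_coe_iff.mpr (hML n)

end MyAux3

/-- if `X = X₁ ∪ X₂` with `X₁, X₂` disjoint compacts and the two generators act
as the identity on `X₂` and preserve `X₁`, then the entropy of the action on `X` equals the
entropy of the restricted action on `X₁`, and every entropy point lies in `X₁`. -/
theorem entropy_of_identity_on_piece [CompactSpace X]
    (X₁ X₂ : Set X) (h1 : IsCompact X₁) (h2 : IsCompact X₂)
    (hdisj : Disjoint X₁ X₂) (hunion : X₁ ∪ X₂ = Set.univ)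
    (f g : X → X) (hf : Continuous f) (hg : Continuous g)
    (hf1 : Set.MapsTo f X₁ X₁) (hg1 : Set.MapsTo g X₁ X₁)
    (hf2 : ∀ x ∈ X₂, f x = x) (hg2 : ∀ x ∈ X₂, g x = x) :
    semigroupEntropy ![f, g] Set.univ = semigroupEntropy ![f, g] X₁ ∧
      {x : X | IsEntropyPoint ![f, g] x} ⊆ X₁ := by
  have hfix2' : ∀ (K : Set X), K ⊆ X₂ → ∀ i : Fin 2, ∀ x ∈ K,
      (![f, g] : Fin 2 → X → X) i x = x := by
    intro K hK i x hx
    fin_cases i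
    · exact hf2 x (hK hx)
    · exact hg2 x (hK hx)
  have hp2 : (0:ℕ) < 2 := by norm_num
  constructor
  · rcases Set.eq_empty_or_nonempty X₁ with hX₁ | hX₁
    · have hX2 : X₂ = Set.univ := by
        rw [hX₁, Set.empty_union] at hunion; exact hunion
      rw [mySemigroupEntropy_zero_of_fixed hp2 ![f, g] Set.univ
          (hfix2' Set.univ (by rw [hX2])), hX₁,
        mySemigroupEntropy_zero_of_fixed hp2 ![f, g] ∅
          (by intro i x hx; exact absurd hx (Set.notMem_empty x))]
    · unfold semigroupEntropy
      apply iSup_congr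
      intro ε
      exact mySepRate_eq hp2 ![f, g] X₁ X₂ hunion
        (fun i x hx => hfix2' X₂ le_rfl i x hx) hX₁ ε.2
  · intro x hx
    by_contra hx1
    have hopen : IsOpen X₁ᶜ := h1.isClosed.isOpen_compl
    obtain ⟨r, hr, hball⟩ := Metric.nhds_basis_closedBall.mem_iff.mp (hopen.mem_nhds hx1)
    have hK2 : Metric.closedBall x r ⊆ X₂ := by
      intro y hy
      have hy1 : y ∉ X₁ := hball hy
      have hmem : y ∈ X₁ ∪ X₂ := hunion ▸ Set.mem_univ y
      rcases hmem with h | h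
      · exact absurd h hy1
      · exact h
    have h0 := hx (Metric.closedBall x r) (Metric.closedBall_mem_nhds x hr)
      Metric.isClosed_closedBall
    rw [mySemigroupEntropy_zero_of_fixed hp2 ![f, g] _ (hfix2' _ hK2)] at h0
    exact lt_irrefl 0 h0
end
end
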